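/- arXiv:1007.4236 — 11 statements merged into one kernel-verified Lean document; each statement's English description precedes it below -/
import Mathlib

section
/- Let a ≠ b be elements of {1,…,n} and let τ = t_m, …, t_1 be a transposition decomposition of the transposition swapping a and b such that no t_i equals this transposition. Then at least one t_i moves a, at least one t_i moves b, and the number of indices i such that t_i moves a plus the number of indices i such that t_i moves b is at least 3. -/
/-!
Suppose only one factor `t` moves `a` and only one factor `s` moves `b`. Following `a` through
the product from the right, it stays put until `t` sends it to `t a`, which is not `b` because
`t ≠ swap a b`; the factors to the left of `t` must then carry `t a` to `b`, so one of them
moves `b`. Hence `s` stands to the left of `t`, and by symmetry `t` stands to the left of `s`,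
which is absurd.
-/

namespace Equiv.Perm

variable {α : Type*}

theorem list_prod_apply_of_forall_apply_eq {l : List (Perm α)} {x : α}
    (h : ∀ t ∈ l, t x = x) : l.prod x = x :=
  (MulAction.stabilizer (Perm α) x).list_prod_mem h

theorem exists_mem_apply_ne_of_list_prod_apply_ne {l : List (Perm α)} {x : α}
    (h : l.prod x ≠ x) : ∃ t ∈ l, t x ≠ x := by
  contrapose! h
  exact list_prod_apply_of_forall_apply_eq h

variable [DecidableEq α]

theorem IsSwap.eq_swap_of_apply_eq {t : Perm α} {a b : α} (ht : t.IsSwap) (hab : a ≠ b)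
    (h : t a = b) : t = swap a b := by
  have hinv : t (t a) = a := by
    obtain ⟨x, y, -, rfl⟩ := ht
    exact swap_apply_self x y a
  simpa [h] using ht.isCycle.eq_swap_of_apply_apply_eq_self (h ▸ hab.symm) hinv

theorem exists_mem_apply_ne_of_list_prod_append_cons {L R : List (Perm α)} {t : Perm α} {a b : α}
    (hab : a ≠ b) (ht : t.IsSwap) (htab : t ≠ swap a b) (hR : ∀ s ∈ R, s a = a)
    (hprod : (L ++ t :: R).prod a = b) : ∃ s ∈ L, s b ≠ b := by
  by_contra! hL
  have hLt : L.prod (t a) = b := by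
    simpa [List.prod_append, mul_apply, list_prod_apply_of_forall_apply_eq hR] using hprod
  have hLb : L.prod b = b := list_prod_apply_of_forall_apply_eq hL
  exact htab (ht.eq_swap_of_apply_eq hab (L.prod.injective (hLt.trans hLb.symm)))

theorem exists_prefix_of_countP_apply_ne_eq_one {l : List (Perm α)} {a b : α} (hab : a ≠ b)
    (hswap : ∀ t ∈ l, t.IsSwap) (hne : ∀ t ∈ l, t ≠ swap a b) (hprod : l.prod a = b)
    (hcount : l.countP (fun t => t a ≠ a) = 1) :
    ∃ L, L <+: l ∧ L.countP (fun t => t a ≠ a) = 0 ∧ 0 < L.countP (fun t => t b ≠ b) := by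
  obtain ⟨t, htl, hta⟩ := List.countP_pos_iff.mp (hcount ▸ Nat.one_pos)
  obtain ⟨L, R, rfl⟩ := List.append_of_mem htl
  have hLR : L.countP (fun t => t a ≠ a) = 0 ∧ R.countP (fun t => t a ≠ a) = 0 := by
    simp only [List.countP_append, List.countP_cons, hta, if_true] at hcount
    omega
  have hR : ∀ s ∈ R, s a = a := by simpa using List.countP_eq_zero.mp hLR.2
  refine ⟨L, List.prefix_append _ _, hLR.1, List.countP_pos_iff.mpr ?_⟩
  simpa using exists_mem_apply_ne_of_list_prod_append_cons hab (hswap t htl) (hne t htl) hR hprod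

end Equiv.Perm

open Equiv Equiv.Perm in
/-- Let `a ≠ b` in `{1,…,n}` (modeled as `Fin n`) and let `τ = t_m, …, t_1`
be a transposition decomposition of `swap a b` in which no `t_i` equals `swap a b`.
Then some `t_i` moves `a`, some `t_i` moves `b`, and the number of indices `i` with
`t_i` moving `a` plus the number of indices with `t_i` moving `b` is at least `3`. -/
theorem stmt0 {n : ℕ} (a b : Fin n) (hab : a ≠ b)
    (l : List (Equiv.Perm (Fin n)))
    (htrans : ∀ t ∈ l, ∃ x y : Fin n, x ≠ y ∧ t = Equiv.swap x y)
    (hprod : l.prod = Equiv.swap a b)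
    (hne : ∀ t ∈ l, t ≠ Equiv.swap a b) :
    (∃ t ∈ l, t a ≠ a) ∧ (∃ t ∈ l, t b ≠ b) ∧
      3 ≤ l.countP (fun t => decide (t a ≠ a)) + l.countP (fun t => decide (t b ≠ b)) := by
  have pa : l.prod a = b := by rw [hprod, swap_apply_left]
  have pb : l.prod b = a := by rw [hprod, swap_apply_right]
  have hA := exists_mem_apply_ne_of_list_prod_apply_ne (pa ▸ hab.symm)
  have hB := exists_mem_apply_ne_of_list_prod_apply_ne (pb ▸ hab)
  refine ⟨hA, hB, ?_⟩
  have hcA := List.countP_pos_iff (p := fun t : Perm (Fin n) => t a ≠ a).mpr (by simpa using hA)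
  have hcB := List.countP_pos_iff (p := fun t : Perm (Fin n) => t b ≠ b).mpr (by simpa using hB)
  by_contra! hlt
  have hne' : ∀ t ∈ l, t ≠ swap b a := fun t ht => swap_comm b a ▸ hne t ht
  obtain ⟨LA, hLA, hLA0, hLAb⟩ :=
    exists_prefix_of_countP_apply_ne_eq_one hab htrans hne pa (by omega)
  obtain ⟨LB, hLB, hLB0, hLBa⟩ :=
    exists_prefix_of_countP_apply_ne_eq_one hab.symm htrans hne' pb (by omega)
  rcases List.prefix_or_prefix_of_prefix hLA hLB with h | h
  · have := h.sublist.countP_le (p := fun t => t b ≠ b)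
    omega
  · have := h.sublist.countP_le (p := fun t => t a ≠ a)
    omega
end

section
/- Let a ≠ b be elements of {1,…,n} and let τ = t_m, …, t_1 be a transposition decomposition of the transposition swapping a and b such that no t_i equals this transposition. Then the number of elements of {1,…,n} other than a and b that are moved by at least one transposition of τ is at most m − 2. -/
/-!
Let `d x` be the number of factors of the decomposition that move `x`. Since each factor is a
transposition, `∑ x, d x = 2m`. A point fixed by the product cannot be moved by exactly one
factor, so `d x ≥ 2` for every moved `x ∉ {a, b}`. Finally `d a + d b ≥ 3`: no factor moves
both `a` and `b`, and if each were moved by a single factor, following `a` and `b` through the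
product shows that it cannot swap them. Hence `2 · #F + 3 ≤ 2m` for the set `F` of the theorem.
-/

open Equiv Equiv.Perm Finset

section

variable {α : Type*}

lemma prod_apply_eq_self {l : List (Perm α)} {x : α} (h : ∀ t ∈ l, t x = x) :
    l.prod x = x := by
  induction l with
  | nil => rfl
  | cons t l ih =>
    rw [List.prod_cons, mul_apply, ih fun s hs => h s (List.mem_cons_of_mem _ hs),
      h t List.mem_cons_self]

lemma exists_mem_apply_ne_of_prod_apply_ne {l : List (Perm α)} {x : α} (h : l.prod x ≠ x) :
    ∃ t ∈ l, t x ≠ x := by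
  by_contra! hfix
  exact h (prod_apply_eq_self hfix)

lemma apply_eq_of_prod_append_cons_apply_eq {C E : List (Perm α)} {s : Perm α} {u v : α}
    (hC : ∀ t ∈ C, t v = v) (hE : ∀ t ∈ E, t u = u) (h : (C ++ s :: E).prod u = v) :
    s u = v := by
  rw [List.prod_append, List.prod_cons, mul_apply, mul_apply, prod_apply_eq_self hE] at h
  exact C.prod.injective (h.trans (prod_apply_eq_self hC).symm)

variable [DecidableEq α]

lemma Equiv.Perm.IsSwap.apply_eq_self_of_ne_swap {t : Perm α} {a b : α} (ht : t.IsSwap)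
    (hab : a ≠ b) (hne : t ≠ swap a b) (hb : t b ≠ b) : t a = a := by
  obtain ⟨x, y, -, rfl⟩ := ht
  by_contra ha
  obtain ⟨-, ha⟩ := swap_apply_ne_self_iff.mp ha
  obtain ⟨-, hb⟩ := swap_apply_ne_self_iff.mp hb
  rcases ha with rfl | rfl <;> rcases hb with rfl | rfl
  exacts [hab rfl, hne rfl, hne (swap_comm _ _), hab rfl]

def moverCount (l : List (Perm α)) (x : α) : ℕ :=
  l.countP fun t => t x ≠ x

@[simp]
lemma moverCount_nil (x : α) : moverCount [] x = 0 := rfl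

@[simp]
lemma moverCount_cons (t : Perm α) (l : List (Perm α)) (x : α) :
    moverCount (t :: l) x = moverCount l x + if t x ≠ x then 1 else 0 := by
  simp [moverCount, List.countP_cons]

@[simp]
lemma moverCount_append (l₁ l₂ : List (Perm α)) (x : α) :
    moverCount (l₁ ++ l₂) x = moverCount l₁ x + moverCount l₂ x :=
  List.countP_append ..

lemma moverCount_eq_zero {l : List (Perm α)} {x : α} :
    moverCount l x = 0 ↔ ∀ t ∈ l, t x = x := by
  simp [moverCount, List.countP_eq_zero]

lemma two_le_moverCount {l : List (Perm α)} {x : α} (hfix : l.prod x = x)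
    (hmove : ∃ t ∈ l, t x ≠ x) : 2 ≤ moverCount l x := by
  obtain ⟨t, ht, htx⟩ := hmove
  obtain ⟨C, E, rfl⟩ := List.append_of_mem ht
  by_contra! hlt
  rw [moverCount_append, moverCount_cons, if_pos htx] at hlt
  have hC : moverCount C x = 0 := by omega
  have hE : moverCount E x = 0 := by omega
  exact htx (apply_eq_of_prod_append_cons_apply_eq (moverCount_eq_zero.mp hC)
    (moverCount_eq_zero.mp hE) hfix)

lemma three_le_moverCount_add {l : List (Perm α)} {a b : α} (hab : a ≠ b)
    (hprod_a : l.prod a = b) (hprod_b : l.prod b = a) (hsep : ∀ t ∈ l, t b ≠ b → t a = a) :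
    3 ≤ moverCount l a + moverCount l b := by
  obtain ⟨r, hr, hra⟩ := exists_mem_apply_ne_of_prod_apply_ne (hprod_a.trans_ne hab.symm)
  obtain ⟨s, hs, hsb⟩ := exists_mem_apply_ne_of_prod_apply_ne (hprod_b.trans_ne hab)
  have hsa := hsep s hs hsb
  have ha : 0 < moverCount l a := Nat.pos_of_ne_zero fun h => hra (moverCount_eq_zero.mp h r hr)
  obtain ⟨C, E, rfl⟩ := List.append_of_mem hs
  by_contra! hlt
  simp only [moverCount_append, moverCount_cons, if_pos hsb, if_neg (not_not_intro hsa)]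
    at hlt ha
  have hCb := moverCount_eq_zero.mp (show moverCount C b = 0 by omega)
  have hEb := moverCount_eq_zero.mp (show moverCount E b = 0 by omega)
  -- `s` is the only factor moving `b`, and `a` is moved by one factor, either before or after `s`.
  rcases Nat.eq_zero_or_pos (moverCount E a) with hEa | hEa
  · have hEa := moverCount_eq_zero.mp hEa
    exact hab (hsa.symm.trans (apply_eq_of_prod_append_cons_apply_eq hCb hEa hprod_a))
  · have hCa := moverCount_eq_zero.mp (show moverCount C a = 0 by omega)
    exact hab (s.injective (hsa.trans
      (apply_eq_of_prod_append_cons_apply_eq hCa hEb hprod_b).symm))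

lemma sum_moverCount [Fintype α] (l : List (Perm α)) :
    ∑ x, moverCount l x = (l.map fun t => #t.support).sum := by
  induction l with
  | nil => simp
  | cons t l ih => simp [sum_add_distrib, ih, Perm.support, card_filter, add_comm]

lemma sum_moverCount_of_isSwap [Fintype α] {l : List (Perm α)} (hl : ∀ t ∈ l, t.IsSwap) :
    ∑ x, moverCount l x = 2 * l.length := by
  rw [sum_moverCount, List.map_congr_left fun t ht => card_support_eq_two.mpr (hl t ht)]
  simp [mul_comm]

end

/-- Let `a ≠ b` in `{1,…,n}` (modeled as `Fin n`) and let `τ = t_m, …, t_1`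
be a transposition decomposition of `swap a b` in which no `t_i` equals `swap a b`.
Then the number of elements other than `a` and `b` that are moved by at least one
transposition of `τ` is at most `m − 2`. -/
theorem stmt1 {n : ℕ} (a b : Fin n) (hab : a ≠ b)
    (l : List (Equiv.Perm (Fin n)))
    (htrans : ∀ t ∈ l, ∃ x y : Fin n, x ≠ y ∧ t = Equiv.swap x y)
    (hprod : l.prod = Equiv.swap a b)
    (hne : ∀ t ∈ l, t ≠ Equiv.swap a b) :
    (Finset.univ.filter fun x : Fin n => x ≠ a ∧ x ≠ b ∧ ∃ t ∈ l, t x ≠ x).card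
      ≤ l.length - 2 := by
  set F := univ.filter fun x : Fin n => x ≠ a ∧ x ≠ b ∧ ∃ t ∈ l, t x ≠ x
  have hF : #F * 2 ≤ ∑ x ∈ F, moverCount l x := by
    rw [← smul_eq_mul]
    refine card_nsmul_le_sum F _ 2 fun x hx => ?_
    obtain ⟨hxa, hxb, hmove⟩ := (mem_filter.mp hx).2
    exact two_le_moverCount (by rw [hprod, swap_apply_of_ne_of_ne hxa hxb]) hmove
  have hab3 : 3 ≤ moverCount l a + moverCount l b :=
    three_le_moverCount_add hab (by rw [hprod, swap_apply_left]) (by rw [hprod, swap_apply_right])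
      fun t ht => IsSwap.apply_eq_self_of_ne_swap (htrans t ht) hab (hne t ht)
  have hsplit : ∑ x ∈ F, moverCount l x + (moverCount l a + moverCount l b)
      ≤ ∑ x, moverCount l x := by
    have haF : a ∉ F := by simp [F]
    have hbF : b ∉ F := by simp [F]
    have := sum_le_sum_of_subset (f := moverCount l) (subset_univ (insert a (insert b F)))
    rw [sum_insert (by simp [hab, haF]), sum_insert hbF] at this
    omega
  have hsum := sum_moverCount_of_isSwap htrans
  omega
end

section
/- Let a ≠ b be elements of {1,…,n} and let τ = t_m, …, t_1 be a transposition decomposition of the transposition swapping a and b. Suppose t_i swaps x and y and is an a,b-cut edge of τ, where x lies in the same connected component as a in the simple graph on {1,…,n} whose edge set is {{a_j,b_j} : j ≠ i}. Then, writing π_j = t_j ∘ ⋯ ∘ t_1 (with π_0 the identity), one has π_{i−1}(a) = x, π_{i−1}(b) = y, π_i(a) = y, and π_i(b) = x. -/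
/-!
Let `P = π_{i-1}` and `S = t_m ⋯ t_{i+1}`, so that `swap a b = S * swap x y * P`.
Every `t_j` with `j ≠ i` swaps two adjacent vertices of `G`, so `P` and `S` keep each vertex
inside its connected component. If `swap x y` fixed `P a`, then `a ~ P a ~ S (P a) = b`; hence
`P a ∈ {x, y}`, and `P a = y` would give `b = S x ~ x ~ a`. Likewise `P b ∈ {x, y}`, and
`P b = x` would give `b ~ x ~ a`.
-/

namespace List

variable {M : Type*} [Monoid M] (f : ℕ → M)

theorem prod_reverse_map_range'_succ (s k : ℕ) :
    ((range' s (k + 1)).map f).reverse.prod = f (s + k) * ((range' s k).map f).reverse.prod := by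
  simp [range'_concat]

theorem prod_reverse_map_range'_eq_mul_mul (s k n : ℕ) :
    ((range' s (k + 1 + n)).map f).reverse.prod =
      ((range' (s + k + 1) n).map f).reverse.prod * f (s + k) *
        ((range' s k).map f).reverse.prod := by
  rw [← range'_append_1, map_append, reverse_append, prod_append,
    prod_reverse_map_range'_succ, ← add_assoc, mul_assoc]

end List

namespace SimpleGraph

variable {V : Type*} (G : SimpleGraph V)

theorem reachable_swap_apply [DecidableEq V] {u v : V} (h : G.Adj u v) (z : V) :
    G.Reachable z (Equiv.swap u v z) := by
  rcases eq_or_ne z u with rfl | hu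
  · simpa using h.reachable
  rcases eq_or_ne z v with rfl | hv
  · simpa using h.symm.reachable
  · rw [Equiv.swap_apply_of_ne_of_ne hu hv]

theorem reachable_list_prod_apply (l : List (Equiv.Perm V))
    (h : ∀ p ∈ l, ∀ z, G.Reachable z (p z)) (z : V) : G.Reachable z (l.prod z) := by
  induction l generalizing z with
  | nil => rfl
  | cons p l ih =>
    rw [List.prod_cons, Equiv.Perm.mul_apply]
    exact (ih (fun q hq ↦ h q (List.mem_cons_of_mem _ hq)) z).trans (h p List.mem_cons_self _)

theorem apply_eq_of_swap_eq_mul_swap_mul [DecidableEq V] {P S : Equiv.Perm V} {a b x y : V}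
    (hP : ∀ z, G.Reachable z (P z)) (hS : ∀ z, G.Reachable z (S z))
    (h : Equiv.swap a b = S * Equiv.swap x y * P)
    (hcut : ¬ G.Reachable a b) (hax : G.Reachable a x) :
    P a = x ∧ P b = y := by
  have happ (z : V) : Equiv.swap a b z = S (Equiv.swap x y (P z)) := by rw [h]; rfl
  have hmoved (z : V) (hz : ¬ G.Reachable z (Equiv.swap a b z)) : P z = x ∨ P z = y := by
    by_contra! hfix
    rw [happ, Equiv.swap_apply_of_ne_of_ne hfix.1 hfix.2] at hz
    exact hz ((hP z).trans (hS _))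
  have hPa : P a = x := by
    refine (hmoved a (by simpa using hcut)).resolve_right fun hy ↦ hcut ?_
    have hb : b = S x := by simpa [hy] using happ a
    exact hax.trans (hb ▸ hS x)
  refine ⟨hPa, (hmoved b (by simpa using fun h' ↦ hcut h'.symm)).resolve_left fun hx ↦ ?_⟩
  exact hcut (hax.trans (hx ▸ hP b).symm)

end SimpleGraph

theorem stmt2_general {n : ℕ} (a b : Fin n) (m : ℕ)
    (t : ℕ → Equiv.Perm (Fin n))
    (htrans : ∀ j, 1 ≤ j → j ≤ m → ∃ x y : Fin n, x ≠ y ∧ t j = Equiv.swap x y)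
    (hprod : (((List.range' 1 m).map t).reverse).prod = Equiv.swap a b)
    (i : ℕ) (hi1 : 1 ≤ i) (him : i ≤ m)
    (x y : Fin n) (hti : t i = Equiv.swap x y)
    (G : SimpleGraph (Fin n))
    (hG : G = SimpleGraph.fromRel fun u v =>
      ∃ j, 1 ≤ j ∧ j ≤ m ∧ j ≠ i ∧ t j = Equiv.swap u v)
    (hcut : ¬ G.Reachable a b)
    (hax : G.Reachable a x) :
    (((List.range' 1 (i - 1)).map t).reverse).prod a = x ∧
    (((List.range' 1 (i - 1)).map t).reverse).prod b = y ∧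
    (((List.range' 1 i).map t).reverse).prod a = y ∧
    (((List.range' 1 i).map t).reverse).prod b = x := by
  obtain ⟨k, rfl⟩ : ∃ k, i = k + 1 := ⟨i - 1, by omega⟩
  have hreach (s l : ℕ) (hl : ∀ j ∈ List.range' s l, 1 ≤ j ∧ j ≤ m ∧ j ≠ k + 1)
      (z : Fin n) :
      G.Reachable z (((List.range' s l).map t).reverse.prod z) := by
    refine G.reachable_list_prod_apply _ (fun p hp ↦ ?_) z
    obtain ⟨j, hj, rfl⟩ := List.mem_map.1 (List.mem_reverse.1 hp)
    obtain ⟨hj1, hjm, hji⟩ := hl j hj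
    obtain ⟨u, v, huv, hjuv⟩ := htrans j hj1 hjm
    have hadj : G.Adj u v := by
      rw [hG, SimpleGraph.fromRel_adj]
      exact ⟨huv, .inl ⟨j, hj1, hjm, hji, hjuv⟩⟩
    rw [hjuv]
    exact G.reachable_swap_apply hadj
  have hsplit := List.prod_reverse_map_range'_eq_mul_mul t 1 k (m - (k + 1))
  rw [show k + 1 + (m - (k + 1)) = m by omega, hprod, show 1 + k = k + 1 by omega, hti] at hsplit
  obtain ⟨hPa, hPb⟩ := G.apply_eq_of_swap_eq_mul_swap_mul
    (hreach _ _ fun j hj ↦ by grind) (hreach _ _ fun j hj ↦ by grind) hsplit hcut hax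
  simp only [add_tsub_cancel_right, List.prod_reverse_map_range'_succ, Equiv.Perm.mul_apply,
    show 1 + k = k + 1 by omega, hti, hPa, hPb, Equiv.swap_apply_left,
    Equiv.swap_apply_right, and_self]

/-- Let `a ≠ b` and let `t_m, …, t_1` (here `t j` for `1 ≤ j ≤ m`) be a
transposition decomposition of `swap a b`.  Suppose `t i = swap x y` is an `a,b`-cut edge,
i.e. `a` and `b` are not connected in the simple graph whose edges are the pairs swapped by
the `t j`, `j ≠ i`, and suppose `x` is in the connected component of `a` in that graph.
Then, with `π_j = t_j ∘ ⋯ ∘ t_1`, we have `π_{i−1} a = x`, `π_{i−1} b = y`,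
`π_i a = y` and `π_i b = x`. -/
theorem stmt2 {n : ℕ} (a b : Fin n) (hab : a ≠ b) (m : ℕ)
    (t : ℕ → Equiv.Perm (Fin n))
    (htrans : ∀ j, 1 ≤ j → j ≤ m → ∃ x y : Fin n, x ≠ y ∧ t j = Equiv.swap x y)
    (hprod : (((List.range' 1 m).map t).reverse).prod = Equiv.swap a b)
    (i : ℕ) (hi1 : 1 ≤ i) (him : i ≤ m)
    (x y : Fin n) (hxy : x ≠ y) (hti : t i = Equiv.swap x y)
    (G : SimpleGraph (Fin n))
    (hG : G = SimpleGraph.fromRel fun u v =>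
      ∃ j, 1 ≤ j ∧ j ≤ m ∧ j ≠ i ∧ t j = Equiv.swap u v)
    (hcut : ¬ G.Reachable a b)
    (hax : G.Reachable a x) :
    (((List.range' 1 (i - 1)).map t).reverse).prod a = x ∧
    (((List.range' 1 (i - 1)).map t).reverse).prod b = y ∧
    (((List.range' 1 i).map t).reverse).prod a = y ∧
    (((List.range' 1 i).map t).reverse).prod b = x :=
  stmt2_general a b m t htrans hprod i hi1 him x y hti G hG hcut hax
end

section
/- Let a ≠ b be elements of {1,…,n} and let τ = t_m, …, t_1 be a transposition decomposition of the transposition swapping a and b. Then there is at most one index i ∈ {1,…,m} such that t_i is an a,b-cut edge of τ. -/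
/-!
Call a permutation of the vertices of a graph component-preserving if it maps every vertex into
its own connected component; these form a subgroup, containing the transposition of any two
connected vertices. Write `swap a b = σ * t_i * ρ` with `ρ = t_{i-1} ⋯ t_1` and
`σ = t_m ⋯ t_{i+1}`. If `t_i = swap u v` is a cut edge, then `σ` and `ρ` preserve the components of
the graph without `t_i`, in which `a` and `b` are separated; so `t_i` must move both `ρ a` and
`ρ b` across, i.e. `t_i` exchanges `ρ a` and `ρ b`. For `i < i'`, the graph without `t_{i'}`
still contains `t_i` and all factors of `ρ`, so there `a ~ ρ a ~ ρ b ~ b`: `t_{i'}` is no cut edge.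
-/

open Equiv

namespace SimpleGraph

variable {V : Type*} (G : SimpleGraph V)

def componentStabilizer : Subgroup (Perm V) where
  carrier := {σ | ∀ z, G.Reachable (σ z) z}
  one_mem' z := Reachable.refl z
  mul_mem' hσ hτ z := (hσ _).trans (hτ z)
  inv_mem' {σ} hσ z := by simpa using (hσ (σ⁻¹ z)).symm

variable {G}

theorem swap_mem_componentStabilizer [DecidableEq V] {u v : V} (h : G.Reachable u v) :
    swap u v ∈ G.componentStabilizer := by
  intro z
  rw [swap_apply_def]
  split_ifs with hu hv
  · exact hu ▸ h.symm
  · exact hv ▸ h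
  · rfl

theorem swap_apply_eq_of_mul_swap_mul_eq_swap [DecidableEq V] {σ ρ : Perm V} {u v a b : V}
    (hσ : σ ∈ G.componentStabilizer) (hρ : ρ ∈ G.componentStabilizer)
    (h : σ * swap u v * ρ = swap a b) (hab : ¬G.Reachable a b) :
    swap u v (ρ a) = ρ b := by
  have hmoved : ∀ {x y}, ¬G.Reachable x y → σ (swap u v (ρ x)) = y → swap u v (ρ x) ≠ ρ x := by
    intro x y hxy hσx hfix
    rw [hfix] at hσx
    exact hxy (hσx ▸ (hρ x).symm.trans (hσ (ρ x)).symm)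
  have ha := hmoved hab (by simpa using congr($h a))
  have hb := hmoved (fun h => hab h.symm) (by simpa using congr($h b))
  have hne : ρ a ≠ ρ b := ρ.injective.ne fun h => hab (h ▸ Reachable.refl a)
  rw [swap_apply_ne_self_iff] at ha hb
  rcases ha with ⟨huv, ha | ha⟩ <;> rcases hb with ⟨-, hb | hb⟩ <;>
    simp_all [swap_apply_left, swap_apply_right]

end SimpleGraph

theorem List.prod_reverse_map_range'_one_eq_mul {M : Type*} [Monoid M] (f : ℕ → M) {k m : ℕ}
    (hk : k < m) :
    ((List.range' 1 m).map f).reverse.prod =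
      ((List.range' (k + 2) (m - k - 1)).map f).reverse.prod * f (k + 1) *
        ((List.range' 1 k).map f).reverse.prod := by
  rw [← Nat.add_sub_of_le hk.le, ← List.range'_append_1, Nat.add_comm 1 k,
    show m - k = (m - k - 1) + 1 by omega, List.range'_succ]
  simp [mul_assoc]

namespace Equiv.Perm

variable {V : Type*} [DecidableEq V]

/-- The graph of the decomposition `t m, …, t 1` with the edge of `t i` removed: `t i` is an
`a,b`-cut edge iff `a` and `b` are not connected in it. -/
def graphExcept (m : ℕ) (t : ℕ → Perm V) (i : ℕ) : SimpleGraph V :=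
  SimpleGraph.fromRel fun u v => ∃ j, 1 ≤ j ∧ j ≤ m ∧ j ≠ i ∧ t j = swap u v

theorem prod_range'_mem_componentStabilizer_graphExcept {m : ℕ} {t : ℕ → Perm V}
    (htrans : ∀ j, 1 ≤ j → j ≤ m → ∃ x y : V, x ≠ y ∧ t j = swap x y) {i s l : ℕ}
    (hs : 1 ≤ s) (hl : s + l ≤ m + 1) (hi : i < s ∨ s + l ≤ i) :
    ((List.range' s l).map t).reverse.prod ∈ (graphExcept m t i).componentStabilizer := by
  refine Subgroup.list_prod_mem _ fun σ hσ => ?_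
  obtain ⟨j, hj, rfl⟩ := List.mem_map.mp (List.mem_reverse.mp hσ)
  rw [List.mem_range'_1] at hj
  have hj1 : 1 ≤ j := by omega
  have hjm : j ≤ m := by omega
  obtain ⟨x, y, hxy, htj⟩ := htrans j hj1 hjm
  rw [htj]
  exact SimpleGraph.swap_mem_componentStabilizer
    (SimpleGraph.Adj.reachable ⟨hxy, Or.inl ⟨j, hj1, hjm, by omega, htj⟩⟩)

end Equiv.Perm

open Equiv.Perm SimpleGraph in
theorem stmt3_general {n : ℕ} (a b : Fin n) (m : ℕ)
    (t : ℕ → Equiv.Perm (Fin n))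
    (htrans : ∀ j, 1 ≤ j → j ≤ m → ∃ x y : Fin n, x ≠ y ∧ t j = Equiv.swap x y)
    (hprod : (((List.range' 1 m).map t).reverse).prod = Equiv.swap a b)
    (i i' : ℕ) (hi1 : 1 ≤ i) (him : i ≤ m) (hi'1 : 1 ≤ i') (hi'm : i' ≤ m)
    (hcut : ¬ (SimpleGraph.fromRel fun u v =>
      ∃ j, 1 ≤ j ∧ j ≤ m ∧ j ≠ i ∧ t j = Equiv.swap u v).Reachable a b)
    (hcut' : ¬ (SimpleGraph.fromRel fun u v =>
      ∃ j, 1 ≤ j ∧ j ≤ m ∧ j ≠ i' ∧ t j = Equiv.swap u v).Reachable a b) :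
    i = i' := by
  wlog hlt : i < i' generalizing i i'
  · rcases (not_lt.mp hlt).eq_or_lt with h | h
    · exact h.symm
    · exact (this i' i hi'1 hi'm hi1 him hcut' hcut h).symm
  obtain ⟨k, rfl⟩ : ∃ k, i = k + 1 := ⟨i - 1, by omega⟩
  obtain ⟨u, v, huv, htu⟩ := htrans (k + 1) hi1 him
  have hsplit := List.prod_reverse_map_range'_one_eq_mul t (k := k) (m := m) (by omega)
  rw [hprod, htu] at hsplit
  set ρ := ((List.range' 1 k).map t).reverse.prod
  have hswap : swap u v (ρ a) = ρ b :=
    swap_apply_eq_of_mul_swap_mul_eq_swap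
      (prod_range'_mem_componentStabilizer_graphExcept htrans (by omega) (by omega) (by omega))
      (prod_range'_mem_componentStabilizer_graphExcept htrans (by omega) (by omega) (by omega))
      hsplit.symm hcut
  have hρ : ρ ∈ (graphExcept m t i').componentStabilizer :=
    prod_range'_mem_componentStabilizer_graphExcept htrans (by omega) (by omega) (by omega)
  have huv' : (graphExcept m t i').Reachable u v :=
    Adj.reachable ⟨huv, Or.inl ⟨k + 1, hi1, him, hlt.ne, htu⟩⟩
  exact absurd ((hρ a).symm.trans <|
    (swap_mem_componentStabilizer huv' (ρ a)).symm.trans (hswap ▸ hρ b)) hcut'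

/-- Let `a ≠ b` and let `t_m, …, t_1` (here `t j` for `1 ≤ j ≤ m`) be a
transposition decomposition of `swap a b`.  Then there is at most one index
`i ∈ {1,…,m}` such that `t i` is an `a,b`-cut edge, i.e. such that `a` and `b` are not
connected in the simple graph whose edges are the pairs swapped by the `t j`, `j ≠ i`. -/
theorem stmt3 {n : ℕ} (a b : Fin n) (hab : a ≠ b) (m : ℕ)
    (t : ℕ → Equiv.Perm (Fin n))
    (htrans : ∀ j, 1 ≤ j → j ≤ m → ∃ x y : Fin n, x ≠ y ∧ t j = Equiv.swap x y)
    (hprod : (((List.range' 1 m).map t).reverse).prod = Equiv.swap a b)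
    (i i' : ℕ) (hi1 : 1 ≤ i) (him : i ≤ m) (hi'1 : 1 ≤ i') (hi'm : i' ≤ m)
    (hcut : ¬ (SimpleGraph.fromRel fun u v =>
      ∃ j, 1 ≤ j ∧ j ≤ m ∧ j ≠ i ∧ t j = Equiv.swap u v).Reachable a b)
    (hcut' : ¬ (SimpleGraph.fromRel fun u v =>
      ∃ j, 1 ≤ j ∧ j ≤ m ∧ j ≠ i' ∧ t j = Equiv.swap u v).Reachable a b) :
    i = i' :=
  stmt3_general a b m t htrans hprod i i' hi1 him hi'1 hi'm hcut hcut'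
end

section
/- For all distinct a, b ∈ {1,…,n} and every path p from a to b, the minimum decomposition cost of the transposition swapping a and b is at most the transposition path cost of p: M_φ(swap(a,b)) ≤ φ̄(p). -/
variable {n : ℕ}

/-- The minimum `φ`-cost over all transposition decompositions of `π`
(a transposition decomposition is a list of pairs `(aᵢ, bᵢ)` of distinct elements
whose associated swaps multiply to `π`; its cost is `Σ φ(aᵢ, bᵢ)`). -/
noncomputable def Mcost (φ : Fin n → Fin n → ℝ) (π : Equiv.Perm (Fin n)) : ℝ :=
  sInf {c : ℝ | ∃ l : List (Fin n × Fin n), (∀ p ∈ l, p.1 ≠ p.2) ∧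
    (l.map fun p => Equiv.swap p.1 p.2).prod = π ∧
    (l.map fun p => φ p.1 p.2).sum = c}

/-- `p` is a path from `a` to `b`: a list of pairwise distinct elements starting
at `a` and ending at `b`. -/
def IsPathList (p : List (Fin n)) (a b : Fin n) : Prop :=
  p.Nodup ∧ p.head? = some a ∧ p.getLast? = some b

/-- The cost of a path: the sum of `φ` over consecutive pairs. -/
noncomputable def pathCost (φ : Fin n → Fin n → ℝ) (p : List (Fin n)) : ℝ :=
  ((p.zip p.tail).map fun q => φ q.1 q.2).sum

/-- The transposition path cost `φ̄(p) = 2 Σ_j φ(c_j, c_{j+1}) − max_j φ(c_j, c_{j+1})`. -/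
noncomputable def tpCost (φ : Fin n → Fin n → ℝ) (p : List (Fin n)) : ℝ :=
  2 * pathCost φ p - sSup {x : ℝ | ∃ q ∈ p.zip p.tail, φ q.1 q.2 = x}

/-!
Conjugating a transposition by a product of transpositions yields a transposition, at the price of
paying for the conjugating word twice. Given any edge `e = (u, v)` of a path from `a` to `b`, walk
the path from `a`: each edge `(x, c)` before `e` reduces `swap x b` to `swap c b` by conjugation with
`swap x c`; at `e`, `swap u v` is conjugated by the product of the swaps along the rest of the path,
which carries `b` to `v` and fixes `u`. Every edge is paid twice except `e`, which is paid once, and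
choosing `e` of maximal weight gives `φ̄(p)`.
-/

open Equiv

section

variable {α : Type*}

def swapCost (φ : α → α → ℝ) (l : List (α × α)) : ℝ :=
  (l.map fun q => φ q.1 q.2).sum

theorem swapCost_conj (φ : α → α → ℝ) (l w : List (α × α)) :
    swapCost φ (w.reverse ++ l ++ w) = swapCost φ l + 2 * swapCost φ w := by
  simp only [swapCost, List.map_append, List.sum_append, List.map_reverse, List.sum_reverse]
  ring

theorem List.Nodup.fst_ne_snd_of_mem_zip_tail {p : List α} (hp : p.Nodup) {q : α × α}
    (hq : q ∈ p.zip p.tail) : q.1 ≠ q.2 := by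
  induction p with
  | nil => simp at hq
  | cons x t ih =>
    cases t with
    | nil => simp at hq
    | cons y s =>
      obtain ⟨hx, ht⟩ := List.nodup_cons.1 hp
      rcases List.mem_cons.1 hq with rfl | hq
      · exact fun h : x = y => hx (h ▸ List.mem_cons_self)
      · exact ih ht hq

theorem exists_mem_zip_tail_of_ne {p : List α} {a b : α} (ha : p.head? = some a)
    (hb : p.getLast? = some b) (hab : a ≠ b) : ∃ e, e ∈ p.zip p.tail := by
  match p, ha, hb with
  | [x], ha, hb => simp_all
  | x :: y :: r, _, _ => exact ⟨(x, y), by simp⟩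

theorem List.exists_mem_sSup_eq (φ : α → α → ℝ) {l : List (α × α)} (hl : ∃ e, e ∈ l) :
    ∃ e ∈ l, sSup {x : ℝ | ∃ q ∈ l, φ q.1 q.2 = x} = φ e.1 e.2 := by
  obtain ⟨e₀, he₀⟩ := hl
  have hS : {x : ℝ | ∃ q ∈ l, φ q.1 q.2 = x} = (fun q => φ q.1 q.2) '' {q | q ∈ l} := by
    ext; simp
  have hne : ({x | ∃ q ∈ l, φ q.1 q.2 = x} : Set ℝ).Nonempty := ⟨_, e₀, he₀, rfl⟩
  obtain ⟨e, he, hsup⟩ := hne.csSup_mem (hS ▸ l.finite_toSet.image _)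
  exact ⟨e, he, hsup.symm⟩

variable [DecidableEq α]

theorem Equiv.inv_mul_swap_mul (σ : Perm α) (x y : α) :
    σ⁻¹ * swap x y * σ = swap (σ⁻¹ x) (σ⁻¹ y) := by
  rw [swap_apply_apply, inv_inv]

def IsSwapDecomposition (l : List (α × α)) (π : Perm α) : Prop :=
  (∀ q ∈ l, q.1 ≠ q.2) ∧ (l.map fun q => swap q.1 q.2).prod = π

namespace IsSwapDecomposition

variable {l w : List (α × α)} {π σ : Perm α}

theorem singleton {x y : α} (h : x ≠ y) : IsSwapDecomposition [(x, y)] (swap x y) :=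
  ⟨by simpa using h, by simp⟩

theorem append (hl : IsSwapDecomposition l π) (hw : IsSwapDecomposition w σ) :
    IsSwapDecomposition (l ++ w) (π * σ) := by
  refine ⟨fun q hq => ?_, by simp [hl.2, hw.2]⟩
  rcases List.mem_append.1 hq with hq | hq
  exacts [hl.1 q hq, hw.1 q hq]

theorem reverse (hl : IsSwapDecomposition l π) : IsSwapDecomposition l.reverse π⁻¹ := by
  refine ⟨fun q hq => hl.1 q (List.mem_reverse.1 hq), ?_⟩
  rw [List.map_reverse, List.prod_reverse_noncomm, List.map_map, ← hl.2]
  simp [Function.comp_def, swap_inv]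

theorem conj (hl : IsSwapDecomposition l π) (hw : IsSwapDecomposition w σ) :
    IsSwapDecomposition (w.reverse ++ l ++ w) (σ⁻¹ * π * σ) :=
  (hw.reverse.append hl).append hw

end IsSwapDecomposition

theorem exists_isSwapDecomposition_zip_tail {p : List α} (hp : p.Nodup) {x y : α}
    (hx : p.head? = some x) (hy : p.getLast? = some y) :
    ∃ σ, IsSwapDecomposition (p.zip p.tail) σ ∧ σ y = x ∧ ∀ z ∉ p, σ z = z := by
  refine ⟨_, ⟨fun q => hp.fst_ne_snd_of_mem_zip_tail, rfl⟩, ?_⟩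
  induction p generalizing x with
  | nil => simp at hx
  | cons d t ih =>
    obtain rfl : d = x := by simpa using hx
    cases t with
    | nil => simp_all
    | cons c r =>
      obtain ⟨hd, ht⟩ := List.nodup_cons.1 hp
      rw [List.getLast?_cons_cons] at hy
      obtain ⟨hcy, hfix⟩ := ih ht rfl hy
      simp only [List.tail_cons] at hcy hfix
      simp only [List.tail_cons, List.zip_cons_cons, List.map_cons, List.prod_cons,
        Perm.mul_apply, hcy, swap_apply_right, true_and]
      intro z hz
      simp only [List.mem_cons, not_or] at hz
      rw [hfix z (by simp [hz.2]), swap_apply_of_ne_of_ne hz.1 hz.2.1]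

theorem exists_isSwapDecomposition_swap_of_mem_zip_tail (φ : α → α → ℝ) {p : List α}
    (hp : p.Nodup) {a b : α} (ha : p.head? = some a) (hb : p.getLast? = some b)
    {e : α × α} (he : e ∈ p.zip p.tail) :
    ∃ l, IsSwapDecomposition l (swap a b) ∧
      swapCost φ l = 2 * swapCost φ (p.zip p.tail) - φ e.1 e.2 := by
  induction p generalizing a e with
  | nil => simp at ha
  | cons x t ih =>
    obtain rfl : x = a := by simpa using ha
    cases t with
    | nil => simp at he
    | cons c r =>
      obtain ⟨hx, ht⟩ := List.nodup_cons.1 hp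
      rw [List.getLast?_cons_cons] at hb
      have hxc : x ≠ c := fun h => hx (h ▸ List.mem_cons_self)
      simp only [List.tail_cons, List.zip_cons_cons, List.mem_cons] at he ⊢
      rcases he with rfl | he
      · obtain ⟨σ, hσ, hσb, hσx⟩ := exists_isSwapDecomposition_zip_tail ht rfl hb
        have hdec := (IsSwapDecomposition.singleton hxc).conj hσ
        rw [inv_mul_swap_mul, Perm.inv_eq_iff_eq.2 (hσx x hx).symm,
          Perm.inv_eq_iff_eq.2 hσb.symm] at hdec
        refine ⟨_, hdec, ?_⟩
        rw [swapCost_conj]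
        simp only [swapCost, List.tail_cons, List.map_cons, List.sum_cons, List.map_nil,
          List.sum_nil]
        ring
      · obtain ⟨l, hl, hlcost⟩ := ih ht rfl hb he
        have hbx : b ≠ x := by
          rintro rfl
          exact hx (List.mem_of_getLast? hb)
        have hbc : b ≠ c := by
          rintro rfl
          obtain ⟨r₀, s, rfl⟩ := List.exists_cons_of_ne_nil (by rintro rfl; simp at he : r ≠ [])
          rw [List.getLast?_cons_cons] at hb
          exact (List.nodup_cons.1 ht).1 (List.mem_of_getLast? hb)
        have hdec := hl.conj (IsSwapDecomposition.singleton hxc)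
        rw [inv_mul_swap_mul, swap_inv, swap_apply_right,
          swap_apply_of_ne_of_ne hbx hbc] at hdec
        refine ⟨_, hdec, ?_⟩
        rw [swapCost_conj, hlcost]
        simp only [swapCost, List.tail_cons, List.map_cons, List.sum_cons, List.map_nil,
          List.sum_nil]
        ring

end

theorem Mcost_le {φ : Fin n → Fin n → ℝ} (hnn : ∀ a b : Fin n, a ≠ b → 0 ≤ φ a b)
    {π : Perm (Fin n)} {l : List (Fin n × Fin n)} (hl : IsSwapDecomposition l π) :
    Mcost φ π ≤ swapCost φ l := by
  refine csInf_le ⟨0, ?_⟩ ⟨l, hl.1, hl.2, rfl⟩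
  rintro _ ⟨l', hl', -, rfl⟩
  exact List.sum_nonneg fun _ hv => by
    obtain ⟨q, hq, rfl⟩ := List.mem_map.1 hv
    exact hnn q.1 q.2 (hl' q hq)

theorem stmt4_general (φ : Fin n → Fin n → ℝ)
    (hnn : ∀ a b : Fin n, a ≠ b → 0 ≤ φ a b)
    (a b : Fin n) (hab : a ≠ b)
    (p : List (Fin n)) (hp : IsPathList p a b) :
    Mcost φ (Equiv.swap a b) ≤ tpCost φ p := by
  obtain ⟨hnd, ha, hb⟩ := hp
  obtain ⟨e, he, hmax⟩ := List.exists_mem_sSup_eq φ (exists_mem_zip_tail_of_ne ha hb hab)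
  obtain ⟨l, hl, hcost⟩ := exists_isSwapDecomposition_swap_of_mem_zip_tail φ hnd ha hb he
  calc Mcost φ (swap a b) ≤ swapCost φ l := Mcost_le hnn hl
    _ = tpCost φ p := by rw [hcost, tpCost, hmax]; rfl

/-- for distinct `a, b` and every path `p` from `a` to `b`,
`M_φ(swap a b) ≤ φ̄(p)`. -/
theorem stmt4 (φ : Fin n → Fin n → ℝ)
    (hnn : ∀ a b : Fin n, a ≠ b → 0 ≤ φ a b)
    (hsym : ∀ a b : Fin n, φ a b = φ b a)
    (a b : Fin n) (hab : a ≠ b)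
    (p : List (Fin n)) (hp : IsPathList p a b) :
    Mcost φ (Equiv.swap a b) ≤ tpCost φ p :=
  stmt4_general φ hnn a b hab p hp
end

section
/- For all distinct a, b ∈ {1,…,n}, the minimum decomposition cost of the transposition swapping a and b equals the minimum transposition path cost over all paths from a to b: M_φ(swap(a,b)) = min_p φ̄(p), the minimum taken over all paths p from a to b. -/
variable {n : ℕ}

/-!
Upper bound: let `uv` be a heaviest edge of a path `a ⋯ u v ⋯ b`. The product `g` of the swaps
along `a ⋯ u` and along `b ⋯ v`, each edge used once, satisfies `g u = a` and `g v = b`, so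
`g * swap u v * g⁻¹ = swap a b` is a decomposition of cost `2 Σ - max`.

Lower bound: follow the tokens initially at `a` and `b` through the transpositions of a
decomposition of `swap a b`. Their trajectories are walks paid for by the decomposition, which
also pays for an edge joining the two trajectories whenever the tokens have been exchanged an
odd number of times. At the end the tokens sit at `b` and `a`, and either case yields two walks
between `a` and `b`; the cheaper one has `2 Σ - max` at most the cost of the decomposition, and
shortening a walk to a path does not increase `2 Σ - max` since the weights are nonnegative.
-/

open Equiv

variable {α : Type*}

noncomputable def transpositionCost (s : Multiset ℝ) : ℝ := 2 * s.sum - sSup {x | x ∈ s}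

section Multiset

variable {s t : Multiset ℝ}

lemma le_sSup_setOf_mem {x : ℝ} (hx : x ∈ s) : x ≤ sSup {x | x ∈ s} :=
  le_csSup (Multiset.finite_toSet s).bddAbove hx

lemma sSup_setOf_mem_mem (hs : s ≠ 0) : sSup {x | x ∈ s} ∈ s :=
  Set.Nonempty.csSup_mem (Multiset.exists_mem_of_ne_zero hs) (Multiset.finite_toSet s)

lemma sSup_setOf_mem_nonneg (hs : ∀ x ∈ s, 0 ≤ x) : 0 ≤ sSup {x | x ∈ s} :=
  Real.sSup_nonneg hs

lemma transpositionCost_le_of_le (hst : s ≤ t) (ht : ∀ x ∈ t, 0 ≤ x) :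
    transpositionCost s ≤ transpositionCost t := by
  obtain ⟨u, rfl⟩ := Multiset.le_iff_exists_add.mp hst
  have hs : ∀ x ∈ s, 0 ≤ x := fun x hx => ht x (Multiset.mem_add.mpr (.inl hx))
  have hu : ∀ x ∈ u, 0 ≤ x := fun x hx => ht x (Multiset.mem_add.mpr (.inr hx))
  have := sSup_setOf_mem_nonneg hs
  have := sSup_setOf_mem_nonneg ht
  have := Multiset.sum_nonneg hu
  rw [transpositionCost, transpositionCost, Multiset.sum_add]
  by_cases hms : sSup {x | x ∈ s + u} ∈ s
  · linarith [le_sSup_setOf_mem hms]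
  rcases eq_or_ne (s + u) 0 with h0 | h0
  · simp_all
  -- the maximum lies in `u`, so dropping `u` saves at least the maximum
  have hmu : sSup {x | x ∈ s + u} ∈ u :=
    (Multiset.mem_add.mp (sSup_setOf_mem_mem h0)).resolve_left hms
  linarith [Multiset.single_le_sum hu _ hmu]

end Multiset

def pairCost (φ : α → α → ℝ) (l : List (α × α)) : ℝ := (l.map fun e => φ e.1 e.2).sum

@[simp] lemma pairCost_append (φ : α → α → ℝ) (l₁ l₂ : List (α × α)) :
    pairCost φ (l₁ ++ l₂) = pairCost φ l₁ + pairCost φ l₂ := by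
  simp [pairCost]

lemma pairCost_append_cons_reverse (φ : α → α → ℝ) (l : List (α × α)) (u v : α) :
    pairCost φ (l ++ (u, v) :: l.reverse) = 2 * pairCost φ l + φ u v := by
  simp [pairCost]
  ring

section Swaps

variable [DecidableEq α]

def swapProd (l : List (α × α)) : Perm α := (l.map fun e => swap e.1 e.2).prod

@[simp] lemma swapProd_nil : swapProd ([] : List (α × α)) = 1 := rfl

@[simp] lemma swapProd_cons (e : α × α) (l : List (α × α)) :
    swapProd (e :: l) = swap e.1 e.2 * swapProd l := rfl

@[simp] lemma swapProd_append (l₁ l₂ : List (α × α)) :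
    swapProd (l₁ ++ l₂) = swapProd l₁ * swapProd l₂ := by
  simp [swapProd]

lemma swapProd_reverse (l : List (α × α)) : swapProd l.reverse = (swapProd l)⁻¹ := by
  induction l with
  | nil => simp
  | cons e l ih => simp [ih, swap_inv]

lemma swapProd_append_cons_reverse (l : List (α × α)) (u v : α) :
    swapProd (l ++ (u, v) :: l.reverse) = swap (swapProd l u) (swapProd l v) := by
  rw [swap_apply_apply, ← swapProd_reverse, ← List.singleton_append, swapProd_append,
    swapProd_append, mul_assoc]
  rfl

end Swaps

namespace SimpleGraph.Walk

variable {G : SimpleGraph α} {φ : α → α → ℝ} {u v w : α}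

noncomputable def weights (φ : α → α → ℝ) (p : G.Walk u v) : Multiset ℝ :=
  (p.darts.map fun d => φ d.fst d.snd : List ℝ)

@[simp] lemma weights_nil : (nil : G.Walk u u).weights φ = 0 := rfl

@[simp] lemma weights_cons (h : G.Adj u v) (p : G.Walk v w) :
    (cons h p).weights φ = φ u v ::ₘ p.weights φ := rfl

@[simp] lemma weights_append (p : G.Walk u v) (q : G.Walk v w) :
    (p.append q).weights φ = p.weights φ + q.weights φ := by
  simp [weights, darts_append]

@[simp] lemma weights_concat (p : G.Walk u v) (h : G.Adj v w) :
    (p.concat h).weights φ = φ v w ::ₘ p.weights φ := by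
  simp [concat_eq_append, add_comm]

lemma weights_reverse (hsym : ∀ a b, φ a b = φ b a) (p : G.Walk u v) :
    p.reverse.weights φ = p.weights φ := by
  simp [weights, darts_reverse, Function.comp_def, hsym]

lemma weights_nonneg (hnn : ∀ a b, G.Adj a b → 0 ≤ φ a b) (p : G.Walk u v) :
    ∀ x ∈ p.weights φ, 0 ≤ x := by
  simp only [weights, Multiset.mem_coe, List.mem_map]
  rintro _ ⟨d, -, rfl⟩
  exact hnn _ _ d.adj

lemma pairCost_map_toProd_darts (p : G.Walk u v) :
    pairCost φ (p.darts.map (·.toProd)) = (p.weights φ).sum := by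
  simp [pairCost, weights, Function.comp_def]

lemma exists_eq_append_cons_of_mem_darts {d : G.Dart} (p : G.Walk u v) (hd : d ∈ p.darts) :
    ∃ (q : G.Walk u d.fst) (r : G.Walk d.snd v), p = q.append (cons d.adj r) := by
  induction p with
  | nil => simp at hd
  | cons h p ih =>
    rw [darts_cons, List.mem_cons] at hd
    rcases hd with rfl | hd
    · exact ⟨nil, p, rfl⟩
    · obtain ⟨q, r, rfl⟩ := ih hd
      exact ⟨cons h q, r, rfl⟩

lemma exists_mem_darts_eq_sSup (p : G.Walk u v) (huv : u ≠ v) :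
    ∃ d ∈ p.darts, φ d.fst d.snd = sSup {x | x ∈ p.weights φ} := by
  have hne : p.weights φ ≠ 0 := by
    cases p with
    | nil => exact absurd rfl huv
    | cons h p => simp
  simpa [weights] using sSup_setOf_mem_mem hne

lemma exists_transpositionCost_le_of_sum_le (hsym : ∀ a b, φ a b = φ b a)
    (p : G.Walk u v) (q : G.Walk v u) {m c : ℝ} (hm : m ≤ sSup {x | x ∈ p.weights φ})
    (hm' : m ≤ sSup {x | x ∈ q.weights φ})
    (h : (p.weights φ).sum + (q.weights φ).sum ≤ c + m) :
    ∃ r : G.Walk u v, transpositionCost (r.weights φ) ≤ c := by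
  rcases le_total (p.weights φ).sum (q.weights φ).sum with hle | hle
  · exact ⟨p, by rw [transpositionCost]; linarith⟩
  · exact ⟨q.reverse, by rw [transpositionCost, weights_reverse hsym]; linarith⟩

variable [DecidableEq α]

lemma transpositionCost_weights_bypass_le (hnn : ∀ a b, G.Adj a b → 0 ≤ φ a b)
    (p : G.Walk u v) :
    transpositionCost (p.bypass.weights φ) ≤ transpositionCost (p.weights φ) := by
  have hdarts : (p.bypass.darts : Multiset G.Dart) ≤ p.darts :=
    Multiset.coe_le.mpr <| List.subperm_of_subset
      (darts_nodup_of_support_nodup p.bypass_isPath.support_nodup) p.darts_bypass_subset_darts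
  refine transpositionCost_le_of_le ?_ (weights_nonneg hnn p)
  simpa [weights] using Multiset.map_le_map (f := fun d => φ d.fst d.snd) hdarts

lemma swapProd_map_toProd_darts_apply_end (p : G.Walk u v) :
    swapProd (p.darts.map (·.toProd)) v = u := by
  induction p with
  | nil => rfl
  | cons h p ih => simp [ih]

lemma swapProd_map_toProd_darts_apply_of_notMem {x : α} (p : G.Walk u v)
    (hx : x ∉ p.support) : swapProd (p.darts.map (·.toProd)) x = x := by
  induction p with
  | nil => rfl
  | cons h p ih =>
    simp only [support_cons, List.mem_cons, not_or] at hx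
    simp [ih hx.2, swap_apply_of_ne_of_ne hx.1 (fun h => hx.2 (h ▸ p.start_mem_support))]

theorem IsPath.exists_swapProd_eq_swap (hsym : ∀ a b, φ a b = φ b a)
    {p : G.Walk u v} (hp : p.IsPath) (huv : u ≠ v) :
    ∃ l : List (α × α), (∀ e ∈ l, G.Adj e.1 e.2) ∧ swapProd l = swap u v ∧
      pairCost φ l = transpositionCost (p.weights φ) := by
  obtain ⟨⟨⟨x, y⟩, hxy⟩, hd, hmax⟩ := p.exists_mem_darts_eq_sSup (φ := φ) huv
  obtain ⟨q, r, rfl⟩ := p.exists_eq_append_cons_of_mem_darts hd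
  dsimp only at q r hmax hxy
  have hdisj : ∀ z ∈ q.support, z ∉ r.support := by
    have := hp.support_nodup
    rw [support_append, support_cons, List.tail_cons, List.nodup_append] at this
    exact fun z hzq hzr => this.2.2 z hzq z hzr rfl
  set l := q.darts.map (·.toProd) ++ r.reverse.darts.map (·.toProd)
  have hlx : swapProd l x = u := by
    rw [swapProd_append, Perm.mul_apply, swapProd_map_toProd_darts_apply_of_notMem r.reverse
      (by simpa using hdisj x q.end_mem_support), swapProd_map_toProd_darts_apply_end]
  have hly : swapProd l y = v := by
    rw [swapProd_append, Perm.mul_apply, swapProd_map_toProd_darts_apply_end,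
      swapProd_map_toProd_darts_apply_of_notMem q (fun h => hdisj v h r.end_mem_support)]
  have hl : pairCost φ l = (q.weights φ).sum + (r.weights φ).sum := by
    rw [pairCost_append, pairCost_map_toProd_darts, pairCost_map_toProd_darts,
      weights_reverse hsym]
  refine ⟨l ++ (x, y) :: l.reverse, ?_, by rw [swapProd_append_cons_reverse, hlx, hly], ?_⟩
  · simp only [l, List.mem_append, List.mem_cons, List.mem_reverse, List.mem_map]
    rintro e (((⟨d, -, rfl⟩ | ⟨d, -, rfl⟩)) | rfl | (⟨d, -, rfl⟩ | ⟨d, -, rfl⟩)) <;>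
      first | exact d.adj | exact hxy
  · rw [pairCost_append_cons_reverse, hl, transpositionCost, ← hmax, weights_append,
      weights_cons, Multiset.sum_add, Multiset.sum_cons]
    ring

end SimpleGraph.Walk

namespace SimpleGraph

variable {G : SimpleGraph α} {φ : α → α → ℝ}

/-- Tokens placed on `p` and `q` have been moved to `x` and `y` by transpositions of total cost
at most `c`: either `c` pays for walks `p ⟶ x` and `q ⟶ y` (the two trajectories), or the tokens
have been exchanged and `c` pays for walks `p ⟶ y` and `q ⟶ x` together with an edge `uv`
joining them. -/
def TokenWalks (G : SimpleGraph α) (φ : α → α → ℝ) (p q x y : α) (c : ℝ) : Prop :=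
  (∃ (w₁ : G.Walk p x) (w₂ : G.Walk q y), (w₁.weights φ).sum + (w₂.weights φ).sum ≤ c) ∨
    ∃ (u v : α) (_ : G.Adj u v) (w₁ : G.Walk p y) (w₂ : G.Walk q x), u ∈ w₁.support ∧
      v ∈ w₂.support ∧ (w₁.weights φ).sum + (w₂.weights φ).sum + φ u v ≤ c

namespace TokenWalks

variable {p q x y x' y' : α} {c c' : ℝ}

lemma start (p q : α) : TokenWalks G φ p q p q 0 :=
  .inl ⟨.nil, .nil, by simp⟩

lemma mono (h : TokenWalks G φ p q x y c) (hc : c ≤ c') : TokenWalks G φ p q x y c' := by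
  rcases h with ⟨w₁, w₂, hw⟩ | ⟨u, v, huv, w₁, w₂, hu, hv, hw⟩
  · exact .inl ⟨w₁, w₂, hw.trans hc⟩
  · exact .inr ⟨u, v, huv, w₁, w₂, hu, hv, hw.trans hc⟩

lemma symm (hsym : ∀ a b, φ a b = φ b a) (h : TokenWalks G φ p q x y c) :
    TokenWalks G φ q p y x c := by
  rcases h with ⟨w₁, w₂, hw⟩ | ⟨u, v, huv, w₁, w₂, hu, hv, hw⟩
  · exact .inl ⟨w₂, w₁, by linarith⟩
  · exact .inr ⟨v, u, huv.symm, w₂, w₁, hv, hu, by rw [hsym]; linarith⟩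

lemma moveLeft (h : TokenWalks G φ p q x y c) (hx : G.Adj x x') :
    TokenWalks G φ p q x' y (c + φ x x') := by
  rcases h with ⟨w₁, w₂, hw⟩ | ⟨u, v, huv, w₁, w₂, hu, hv, hw⟩
  · refine .inl ⟨w₁.concat hx, w₂, ?_⟩
    rw [Walk.weights_concat, Multiset.sum_cons]
    linarith
  · refine .inr ⟨u, v, huv, w₁, w₂.concat hx, hu, by simp [hv], ?_⟩
    rw [Walk.weights_concat, Multiset.sum_cons]
    linarith

lemma moveRight (hsym : ∀ a b, φ a b = φ b a) (h : TokenWalks G φ p q x y c)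
    (hy : G.Adj y y') : TokenWalks G φ p q x y' (c + φ y y') :=
  ((h.symm hsym).moveLeft hy).symm hsym

lemma exchange (hnn : ∀ a b, G.Adj a b → 0 ≤ φ a b) (h : TokenWalks G φ p q x y c)
    (hxy : G.Adj x y) : TokenWalks G φ p q y x (c + φ x y) := by
  rcases h with ⟨w₁, w₂, hw⟩ | ⟨u, v, huv, w₁, w₂, hu, hv, hw⟩
  · exact .inr ⟨x, y, hxy, w₁, w₂, w₁.end_mem_support, w₂.end_mem_support, by linarith⟩
  · exact .inl ⟨w₁, w₂, by linarith [hnn u v huv, hnn x y hxy]⟩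

variable [DecidableEq α]

lemma applySwap (hnn : ∀ a b, G.Adj a b → 0 ≤ φ a b) (hsym : ∀ a b, φ a b = φ b a)
    (h : TokenWalks G φ p q x y c) (hxy : x ≠ y) {s t : α} (hst : G.Adj s t) :
    TokenWalks G φ p q (swap s t x) (swap s t y) (c + φ s t) := by
  by_cases hx : x = s ∨ x = t <;> by_cases hy : y = s ∨ y = t
  · obtain ⟨rfl, rfl⟩ | ⟨rfl, rfl⟩ : (x = s ∧ y = t) ∨ (x = t ∧ y = s) := by
      rcases hx with rfl | rfl <;> rcases hy with rfl | rfl <;> simp_all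
    · simpa using h.exchange hnn hst
    · simpa [hsym y x] using h.exchange hnn hst.symm
  · rw [not_or] at hy
    rw [swap_apply_of_ne_of_ne hy.1 hy.2]
    rcases hx with rfl | rfl
    · simpa using h.moveLeft hst
    · simpa [hsym x s] using h.moveLeft hst.symm
  · rw [not_or] at hx
    rw [swap_apply_of_ne_of_ne hx.1 hx.2]
    rcases hy with rfl | rfl
    · simpa using h.moveRight hsym hst
    · simpa [hsym y s] using h.moveRight hsym hst.symm
  · rw [not_or] at hx hy
    rw [swap_apply_of_ne_of_ne hx.1 hx.2, swap_apply_of_ne_of_ne hy.1 hy.2]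
    exact h.mono (le_add_of_nonneg_right (hnn s t hst))

lemma of_swapProd (hnn : ∀ a b, G.Adj a b → 0 ≤ φ a b) (hsym : ∀ a b, φ a b = φ b a)
    {l : List (α × α)} (hl : ∀ e ∈ l, G.Adj e.1 e.2) (hpq : p ≠ q) :
    TokenWalks G φ p q (swapProd l p) (swapProd l q) (pairCost φ l) := by
  induction l with
  | nil => exact start p q
  | cons e l ih =>
    have h := (ih fun e' he' => hl e' (.tail e he')).applySwap hnn hsym
      ((swapProd l).injective.ne hpq) (hl e (.head l))
    simpa [pairCost, add_comm] using h

lemma exists_walk (hnn : ∀ a b, G.Adj a b → 0 ≤ φ a b) (hsym : ∀ a b, φ a b = φ b a)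
    (h : TokenWalks G φ p q q p c) : ∃ w : G.Walk p q, transpositionCost (w.weights φ) ≤ c := by
  rcases h with ⟨w₁, w₂, hw⟩ | ⟨u, v, huv, w₁, w₂, hu, hv, hw⟩
  · exact w₁.exists_transpositionCost_le_of_sum_le hsym w₂
      (sSup_setOf_mem_nonneg (w₁.weights_nonneg hnn))
      (sSup_setOf_mem_nonneg (w₂.weights_nonneg hnn)) (by linarith)
  -- reroute the closed walks `w₁` at `p` and `w₂` at `q` through the edge `uv`
  have h₁ := congrArg (fun w => (w.weights φ).sum) (w₁.take_spec hu)
  have h₂ := congrArg (fun w => (w.weights φ).sum) (w₂.take_spec hv)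
  simp only [Walk.weights_append, Multiset.sum_add] at h₁ h₂
  refine Walk.exists_transpositionCost_le_of_sum_le hsym
    ((w₁.takeUntil u hu).append (.cons huv (w₂.dropUntil v hv)))
    ((w₂.takeUntil v hv).append (.cons huv.symm (w₁.dropUntil u hu))) (m := φ u v)
    (le_sSup_setOf_mem (by simp)) (le_sSup_setOf_mem (by simp [hsym v u])) ?_
  simp only [Walk.weights_append, Walk.weights_cons, Multiset.sum_add, Multiset.sum_cons,
    hsym v u]
  linarith

end TokenWalks

theorem exists_isPath_transpositionCost_le_pairCost [DecidableEq α] {a b : α}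
    (hnn : ∀ a b, G.Adj a b → 0 ≤ φ a b) (hsym : ∀ a b, φ a b = φ b a)
    {l : List (α × α)} (hl : ∀ e ∈ l, G.Adj e.1 e.2) (hab : a ≠ b)
    (hprod : swapProd l = swap a b) :
    ∃ P : G.Walk a b, P.IsPath ∧ transpositionCost (P.weights φ) ≤ pairCost φ l := by
  have h := TokenWalks.of_swapProd hnn hsym hl hab
  rw [hprod, swap_apply_left, swap_apply_right] at h
  obtain ⟨W, hW⟩ := h.exists_walk hnn hsym
  exact ⟨W.bypass, W.bypass_isPath, (W.transpositionCost_weights_bypass_le hnn).trans hW⟩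

end SimpleGraph

namespace SimpleGraph.Walk

lemma zip_support_tail {G : SimpleGraph α} {u v : α} (p : G.Walk u v) :
    p.support.zip p.support.tail = p.darts.map (·.toProd) := by
  induction p with
  | nil => rfl
  | cons h p ih =>
    rw [support_cons, List.tail_cons, darts_cons, List.map_cons, ← ih, ← p.cons_tail_support]
    rfl

variable {G : SimpleGraph (Fin n)} {u v : Fin n}

lemma tpCost_support (φ : Fin n → Fin n → ℝ) (p : G.Walk u v) :
    tpCost φ p.support = transpositionCost (p.weights φ) := by
  simp [tpCost, pathCost, transpositionCost, zip_support_tail, weights, Function.comp_def]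

lemma IsPath.isPathList_support {p : G.Walk u v} (hp : p.IsPath) : IsPathList p.support u v :=
  ⟨hp.support_nodup, by rw [← p.cons_tail_support]; rfl,
    by rw [List.getLast?_eq_some_getLast p.support_ne_nil, getLast_support]⟩

end SimpleGraph.Walk

lemma IsPathList.exists_isPath_support_eq {l : List (Fin n)} {a b : Fin n}
    (h : IsPathList l a b) :
    ∃ p : (⊤ : SimpleGraph (Fin n)).Walk a b, p.IsPath ∧ p.support = l := by
  obtain ⟨hnd, hhead, hlast⟩ := h
  induction l generalizing a with
  | nil => simp at hhead
  | cons c l ih =>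
    obtain rfl : c = a := by simpa using hhead
    cases l with
    | nil =>
      obtain rfl : c = b := by simpa using hlast
      exact ⟨.nil, by simp, rfl⟩
    | cons d l =>
      obtain ⟨p, -, hp⟩ := ih hnd.of_cons rfl (by simpa using hlast)
      have hcd : c ≠ d := fun h => (List.nodup_cons.mp hnd).1 (h ▸ List.mem_cons_self)
      refine ⟨.cons hcd p, .mk' ?_, by simp [hp]⟩
      simpa [hp] using hnd

/-- for distinct `a, b`, the minimum decomposition cost of `swap a b`
equals the minimum transposition path cost over all paths from `a` to `b`. -/
theorem stmt5 (φ : Fin n → Fin n → ℝ)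
    (hnn : ∀ a b : Fin n, a ≠ b → 0 ≤ φ a b)
    (hsym : ∀ a b : Fin n, φ a b = φ b a)
    (a b : Fin n) (hab : a ≠ b) :
    Mcost φ (Equiv.swap a b)
      = sInf {c : ℝ | ∃ p : List (Fin n), IsPathList p a b ∧ tpCost φ p = c} := by
  apply csInf_eq_csInf_of_forall_exists_le
  · rintro _ ⟨l, hl, hprod, rfl⟩
    obtain ⟨P, hP, hle⟩ := SimpleGraph.exists_isPath_transpositionCost_le_pairCost
      (G := ⊤) hnn hsym hl hab hprod
    exact ⟨_, ⟨P.support, hP.isPathList_support, rfl⟩, by rwa [SimpleGraph.Walk.tpCost_support]⟩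
  · rintro _ ⟨l, hl, rfl⟩
    obtain ⟨P, hP, rfl⟩ := hl.exists_isPath_support_eq
    obtain ⟨L, hL, hprod, hcost⟩ := hP.exists_swapProd_eq_swap hsym hab
    exact ⟨_, ⟨L, hL, hprod, rfl⟩, by rw [SimpleGraph.Walk.tpCost_support, ← hcost]; rfl⟩
end

section
/- For all distinct a, b ∈ {1,…,n}, the minimum decomposition cost of the transposition swapping a and b is at most twice the minimum path cost between a and b: M_φ(swap(a,b)) ≤ 2·cost(p*(a,b)). -/
variable {n : ℕ}

/-! Along a path `a = c₀, c₁, …, c_m = b`, the transposition `(a b)` is the conjugate of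
`(c₁ b)` by `(a c₁)`. Recursing along the path writes `(a b)` as a product of transpositions
of consecutive path vertices, each used at most twice. -/

lemma pathCost_cons_cons (φ : Fin n → Fin n → ℝ) (x y : Fin n) (t : List (Fin n)) :
    pathCost φ (x :: y :: t) = φ x y + pathCost φ (y :: t) := by
  simp [pathCost]

lemma exists_isPathList (a b : Fin n) : ∃ p, IsPathList p a b := by
  by_cases hab : a = b
  · exact ⟨[a], by simp [IsPathList, hab]⟩
  · exact ⟨[a, b], by simp [IsPathList, hab]⟩

lemma Mcost_le_sum_of_prod_eq {φ : Fin n → Fin n → ℝ}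
    (hnn : ∀ a b : Fin n, a ≠ b → 0 ≤ φ a b)
    {π : Equiv.Perm (Fin n)} {l : List (Fin n × Fin n)} (hl : ∀ q ∈ l, q.1 ≠ q.2)
    (hprod : (l.map fun q => Equiv.swap q.1 q.2).prod = π) :
    Mcost φ π ≤ (l.map fun q => φ q.1 q.2).sum := by
  refine csInf_le ⟨0, ?_⟩ ⟨l, hl, hprod, rfl⟩
  rintro _ ⟨l', hl', -, rfl⟩
  exact List.sum_nonneg fun _ hc => by
    obtain ⟨q, hq, rfl⟩ := List.mem_map.mp hc
    exact hnn q.1 q.2 (hl' q hq)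

lemma swap_mul_swap_mul_swap_of_ne {α : Type*} [DecidableEq α] {a y b : α}
    (hab : a ≠ b) (hyb : y ≠ b) :
    Equiv.swap a y * Equiv.swap y b * Equiv.swap a y = Equiv.swap a b := by
  have := Equiv.swap_apply_apply (Equiv.swap a y) y b
  rwa [Equiv.swap_apply_right, Equiv.swap_apply_of_ne_of_ne hab.symm hyb.symm,
    Equiv.swap_inv, eq_comm] at this

lemma exists_swap_decomposition_of_isPathList {φ : Fin n → Fin n → ℝ}
    (hnn : ∀ a b : Fin n, a ≠ b → 0 ≤ φ a b) {p : List (Fin n)} {a b : Fin n}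
    (hp : IsPathList p a b) :
    ∃ l : List (Fin n × Fin n), (∀ q ∈ l, q.1 ≠ q.2) ∧
      (l.map fun q => Equiv.swap q.1 q.2).prod = Equiv.swap a b ∧
      (l.map fun q => φ q.1 q.2).sum ≤ 2 * pathCost φ p := by
  induction p generalizing a with
  | nil => simp [IsPathList] at hp
  | cons x t ih =>
    obtain ⟨hnd, hhead, hlast⟩ := hp
    obtain rfl : x = a := by simpa using hhead
    rcases t with _ | ⟨y, _ | ⟨z, t⟩⟩
    · obtain rfl : x = b := by simpa using hlast
      exact ⟨[], by simp, by simp [← Equiv.Perm.one_def], by simp [pathCost]⟩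
    · obtain rfl : y = b := by simpa using hlast
      have hxy : x ≠ y := by simpa using hnd
      refine ⟨[(x, y)], by simpa using hxy, by simp, ?_⟩
      have := hnn x y hxy
      simp [pathCost]
      linarith
    · have hx : x ∉ y :: z :: t := (List.nodup_cons.mp hnd).1
      have hb : b ∈ z :: t := List.mem_of_getLast? (by simpa using hlast)
      have hxy : x ≠ y := fun h => hx (h ▸ List.mem_cons_self)
      have hxb : x ≠ b := fun h => hx (h ▸ List.mem_cons_of_mem _ hb)
      have hyb : y ≠ b := fun h => (List.nodup_cons.mp hnd.of_cons).1 (h ▸ hb)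
      obtain ⟨l, hl, hprod, hcost⟩ := ih ⟨hnd.of_cons, rfl, by simpa using hlast⟩
      refine ⟨(x, y) :: l ++ [(x, y)], ?_, ?_, ?_⟩
      · simp only [List.cons_append, List.mem_cons, List.mem_append, List.not_mem_nil, or_false]
        rintro q (rfl | hq | rfl)
        exacts [hxy, hl q hq, hxy]
      · simp [hprod, ← mul_assoc, swap_mul_swap_mul_swap_of_ne hxb hyb]
      · rw [pathCost_cons_cons φ x y]
        simp only [List.cons_append, List.map_cons, List.map_append, List.sum_cons,
          List.sum_append, List.map_nil, List.sum_nil]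
        linarith [hnn x y hxy]

theorem stmt6_general (φ : Fin n → Fin n → ℝ)
    (hnn : ∀ a b : Fin n, a ≠ b → 0 ≤ φ a b)
    (a b : Fin n) :
    Mcost φ (Equiv.swap a b)
      ≤ 2 * sInf {c : ℝ | ∃ p : List (Fin n), IsPathList p a b ∧ pathCost φ p = c} := by
  have : Mcost φ (Equiv.swap a b) / 2 ≤
      sInf {c : ℝ | ∃ p : List (Fin n), IsPathList p a b ∧ pathCost φ p = c} := by
    obtain ⟨p, hp⟩ := exists_isPathList a b
    refine le_csInf ⟨_, p, hp, rfl⟩ ?_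
    rintro _ ⟨p, hp, rfl⟩
    obtain ⟨l, hl, hprod, hcost⟩ := exists_swap_decomposition_of_isPathList hnn hp
    linarith [Mcost_le_sum_of_prod_eq hnn hl hprod]
  linarith

/-- for distinct `a, b`, the minimum decomposition cost of `swap a b`
is at most twice the minimum path cost between `a` and `b`. -/
theorem stmt6 (φ : Fin n → Fin n → ℝ)
    (hnn : ∀ a b : Fin n, a ≠ b → 0 ≤ φ a b)
    (hsym : ∀ a b : Fin n, φ a b = φ b a)
    (a b : Fin n) (hab : a ≠ b) :
    Mcost φ (Equiv.swap a b)
      ≤ 2 * sInf {c : ℝ | ∃ p : List (Fin n), IsPathList p a b ∧ pathCost φ p = c} :=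
  stmt6_general φ hnn a b
end

section
/- Let w_1, …, w_{n−1} be nonnegative reals and let 1 ≤ i < j ≤ n. The minimum, over all decompositions of the transposition swapping i and j into a product of adjacent transpositions swap(t, t+1) (1 ≤ t ≤ n−1), of the total weight (the sum of w_t over the adjacent transpositions used, with multiplicity) equals 2 Σ_{t=i}^{j−1} w_t − max_{i ≤ t ≤ j−1} w_t. -/
/-!
Every adjacent transposition `swap t (t+1)` with `i ≤ t < j` must occur in a decomposition of
`swap i j`: otherwise the product would preserve the cut `{x ≤ t}`, which `swap i j` does not.
Moreover at most one of them occurs only once. If `t < t'` both occurred once, reversing the word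
if necessary (which inverts the product) we may assume the `t'` comes after the `t` in the word,
i.e. is applied before it. Following `i` through the word, it stays `≤ t` until the `t` is applied,
is then `≤ t + 1 ≤ t'`, and stays `≤ t'` to the end, contradicting that it lands on `j`.
So, with nonnegative weights, a decomposition weighs at least `2 Σ w - max w`.
Conversely, for `m` in `[i, j)`, conjugating `swap m (m+1)` by the word that moves `m` down to `i`
and `m + 1` up to `j` gives a decomposition of weight exactly `2 Σ w - w m`.
-/

open Equiv Finset
open Fin.NatCast
open scoped Pointwise

lemma List.exists_eq_append_cons_of_count_eq_one {α : Type*} [BEq α] [LawfulBEq α] {a : α}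
    {l : List α} (h : l.count a = 1) : ∃ l₁ l₂, l = l₁ ++ a :: l₂ ∧ a ∉ l₁ ∧ a ∉ l₂ := by
  obtain ⟨l₁, l₂, rfl⟩ := List.append_of_mem (List.count_pos_iff.mp (by omega : 0 < l.count a))
  simp only [List.count_append, List.count_cons_self] at h
  exact ⟨l₁, l₂, rfl, List.count_eq_zero.mp (by omega), List.count_eq_zero.mp (by omega)⟩

lemma two_mul_sum_sub_le_sum_nsmul {ι R : Type*} [CommRing R] [LinearOrder R]
    [IsStrictOrderedRing R] (s : Finset ι) (c : ι → ℕ) (w : ι → R) {m : ι}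
    (hm : m ∈ s) (hw : ∀ u ∈ s, 0 ≤ w u) (hmax : ∀ u ∈ s, w u ≤ w m) (hc : ∀ u ∈ s, 1 ≤ c u)
    (hc₂ : ∀ u ∈ s, ∀ v ∈ s, u ≠ v → c u = 1 → 2 ≤ c v) :
    2 * ∑ u ∈ s, w u - w m ≤ ∑ u ∈ s, c u • w u := by
  classical
  have double {u : ι} (hu : u ∈ s) (h : 2 ≤ c u) : 2 * w u ≤ c u • w u := by
    rw [nsmul_eq_mul]
    exact mul_le_mul_of_nonneg_right (by exact_mod_cast h) (hw u hu)
  by_cases hone : ∃ t ∈ s, c t = 1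
  · obtain ⟨t, ht, hct⟩ := hone
    calc 2 * ∑ u ∈ s, w u - w m ≤ 2 * ∑ u ∈ s, w u - w t := by linarith [hmax t ht]
      _ = w t + ∑ u ∈ s.erase t, 2 * w u := by rw [← add_sum_erase s w ht, ← mul_sum]; ring
      _ ≤ c t • w t + ∑ u ∈ s.erase t, c u • w u := by
        refine add_le_add (by simp [hct]) (sum_le_sum fun u hu => ?_)
        have hu' := mem_of_mem_erase hu
        exact double hu' (hc₂ t ht u hu' (ne_of_mem_erase hu).symm hct)
      _ = ∑ u ∈ s, c u • w u := add_sum_erase s (fun u => c u • w u) ht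
  · simp only [not_exists, not_and] at hone
    calc 2 * ∑ u ∈ s, w u - w m ≤ ∑ u ∈ s, 2 * w u := by rw [← mul_sum]; linarith [hw m hm]
      _ ≤ ∑ u ∈ s, c u • w u :=
        sum_le_sum fun u hu => double hu (by have := hc u hu; have := hone u hu; omega)

lemma sum_map_range'_sub_eq_sum_Ico {M : Type*} [AddCommMonoid M] (w : ℕ → M) (a b : ℕ) :
    ((List.range' a (b - a)).map w).sum = ∑ t ∈ Ico a b, w t := by
  rw [Nat.Ico_eq_range']
  rfl

-- `[i, …, m - 1, j - 1, …, m + 1]`: its product moves `m` down to `i` and `m + 1` up to `j`.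
def moveWord (i m j : ℕ) : List ℕ :=
  List.range' i (m - i) ++ (List.range' (m + 1) (j - (m + 1))).reverse

lemma mem_moveWord {i m j u : ℕ} : u ∈ moveWord i m j ↔ i ≤ u ∧ u < m ∨ m < u ∧ u < j := by
  simp only [moveWord, List.mem_append, List.mem_reverse, List.mem_range'_1]
  omega

lemma sum_map_moveWord {M : Type*} [AddCommMonoid M] (w : ℕ → M) (i m j : ℕ) :
    ((moveWord i m j).map w).sum = ∑ t ∈ Ico i m, w t + ∑ t ∈ Ico (m + 1) j, w t := by
  simp [moveWord, sum_map_range'_sub_eq_sum_Ico]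

lemma lt_of_mem_moveWord {i m j u : ℕ} (hmj : m < j) (hu : u ∈ moveWord i m j) : u < j := by
  rw [mem_moveWord] at hu
  omega

def swapWord (i m j : ℕ) : List ℕ :=
  moveWord i m j ++ m :: (moveWord i m j).reverse

lemma lt_of_mem_swapWord {i m j u : ℕ} (hmj : m < j) (hu : u ∈ swapWord i m j) : u < j := by
  simp only [swapWord, List.mem_append, List.mem_cons, List.mem_reverse] at hu
  rcases hu with hu | rfl | hu
  · exact lt_of_mem_moveWord hmj hu
  · exact hmj
  · exact lt_of_mem_moveWord hmj hu

lemma sum_map_swapWord {R : Type*} [CommRing R] (w : ℕ → R) {i m j : ℕ} (him : i ≤ m)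
    (hmj : m < j) : ((swapWord i m j).map w).sum = 2 * ∑ t ∈ Ico i j, w t - w m := by
  rw [swapWord, List.map_append, List.map_cons, List.sum_append, List.sum_cons, List.map_reverse,
    List.sum_reverse, sum_map_moveWord, ← sum_Ico_consecutive w him hmj.le,
    sum_eq_sum_Ico_succ_bot hmj]
  ring

def adjSwap (n : ℕ) [NeZero n] (t : ℕ) : Perm (Fin n) :=
  swap (t : Fin n) ((t + 1 : ℕ) : Fin n)

section

variable {n : ℕ} [NeZero n]

lemma adjSwap_inv (t : ℕ) : (adjSwap n t)⁻¹ = adjSwap n t :=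
  swap_inv _ _

lemma prod_map_adjSwap_reverse (l : List ℕ) :
    (l.reverse.map (adjSwap n)).prod = (l.map (adjSwap n)).prod⁻¹ := by
  simp [List.prod_inv_reverse, Function.comp_def, adjSwap_inv]

lemma val_adjSwap_apply {u : ℕ} (hu : u + 1 < n) (x : Fin n) :
    (adjSwap n u x : ℕ) = if (x : ℕ) = u then u + 1 else if (x : ℕ) = u + 1 then u else x := by
  have h₁ : ((u : Fin n) : ℕ) = u := Fin.val_cast_of_lt (by omega)
  have h₂ : (((u + 1 : ℕ) : Fin n) : ℕ) = u + 1 := Fin.val_cast_of_lt hu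
  rw [adjSwap, swap_apply_def]
  split_ifs <;> simp_all [Fin.ext_iff]

lemma adjSwap_mem_stabilizer_cut {u t : ℕ} (hu : u + 1 < n) (hut : u ≠ t) :
    adjSwap n u ∈ MulAction.stabilizer (Perm (Fin n)) {x : Fin n | (x : ℕ) ≤ t} := by
  rw [MulAction.mem_stabilizer_set]
  intro x
  change (adjSwap n u x : ℕ) ≤ t ↔ (x : ℕ) ≤ t
  rw [val_adjSwap_apply hu]
  split_ifs <;> omega

lemma prod_map_adjSwap_apply_le_iff {l : List ℕ} (hl : ∀ u ∈ l, u + 1 < n) {t : ℕ} (ht : t ∉ l)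
    (x : Fin n) : ((l.map (adjSwap n)).prod x : ℕ) ≤ t ↔ (x : ℕ) ≤ t := by
  refine MulAction.mem_stabilizer_set.mp
    (Subgroup.list_prod_mem (MulAction.stabilizer (Perm (Fin n)) {x : Fin n | (x : ℕ) ≤ t}) ?_) x
  simp only [List.mem_map, forall_exists_index, and_imp, forall_apply_eq_imp_iff₂]
  exact fun u hu => adjSwap_mem_stabilizer_cut (hl u hu) (ne_of_mem_of_not_mem hu ht)

lemma prod_map_adjSwap_apply_of_forall_ne {l : List ℕ} (hl : ∀ u ∈ l, u + 1 < n) {x : ℕ}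
    (hx : x < n) (hxl : ∀ u ∈ l, x ≠ u ∧ x ≠ u + 1) :
    (l.map (adjSwap n)).prod (x : Fin n) = x := by
  refine MulAction.mem_stabilizer_iff.mp
    (Subgroup.list_prod_mem (MulAction.stabilizer (Perm (Fin n)) (x : Fin n)) ?_)
  simp only [List.mem_map, forall_exists_index, and_imp, forall_apply_eq_imp_iff₂]
  intro u hu
  have hne {a b : ℕ} (ha : a < n) (hb : b < n) (hab : a ≠ b) : (a : Fin n) ≠ b := by
    simp [Fin.ext_iff, Fin.val_cast_of_lt ha, Fin.val_cast_of_lt hb, hab]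
  exact swap_apply_of_ne_of_ne (hne hx (by have := hl u hu; omega) (hxl u hu).1)
    (hne hx (hl u hu) (hxl u hu).2)

lemma prod_map_adjSwap_range'_apply {a k : ℕ} (h : a + k < n) :
    ((List.range' a k).map (adjSwap n)).prod ((a + k : ℕ) : Fin n) = a := by
  induction k generalizing a with
  | zero => simp
  | succ k ih =>
    rw [List.range'_succ, List.map_cons, List.prod_cons, Perm.mul_apply,
      show a + (k + 1) = a + 1 + k by omega, ih (by omega), adjSwap, swap_apply_right]

lemma mem_of_prod_map_adjSwap_eq_swap {l : List ℕ} (hl : ∀ u ∈ l, u + 1 < n) {i j : Fin n}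
    (h : (l.map (adjSwap n)).prod = swap i j) {t : ℕ} (hit : (i : ℕ) ≤ t) (htj : t < j) :
    t ∈ l := by
  by_contra ht
  have := (prod_map_adjSwap_apply_le_iff hl ht i).mpr hit
  rw [h, swap_apply_left] at this
  omega

lemma prod_map_adjSwap_ne_swap_of_split {l₁ l₂ : List ℕ} {t t' : ℕ}
    (hl : ∀ u ∈ l₁ ++ t :: l₂, u + 1 < n) {i j : Fin n} (hit : (i : ℕ) ≤ t) (htt' : t < t')
    (ht'j : t' < j) (h₁ : t' ∉ l₁) (h₂ : t ∉ l₂) :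
    ((l₁ ++ t :: l₂).map (adjSwap n)).prod ≠ swap i j := by
  intro h
  have hl₁ : ∀ u ∈ l₁, u + 1 < n := fun u hu => hl u (by simp [hu])
  have hl₂ : ∀ u ∈ l₂, u + 1 < n := fun u hu => hl u (by simp [hu])
  have hi := congrArg (fun p : Perm (Fin n) => (p i : ℕ)) h
  simp only [List.map_append, List.map_cons, List.prod_append, List.prod_cons, Perm.mul_apply,
    swap_apply_left] at hi
  have hi₂ := (prod_map_adjSwap_apply_le_iff hl₂ h₂ i).mpr hit
  have hi₃ : (adjSwap n t ((l₂.map (adjSwap n)).prod i) : ℕ) ≤ t' := by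
    rw [val_adjSwap_apply (hl t (by simp))]
    split_ifs <;> omega
  have := (prod_map_adjSwap_apply_le_iff hl₁ h₁ _).mpr hi₃
  omega

lemma count_ne_one_of_prod_map_adjSwap_eq_swap {l : List ℕ} (hl : ∀ u ∈ l, u + 1 < n)
    {i j : Fin n} (h : (l.map (adjSwap n)).prod = swap i j) {t t' : ℕ} (hit : (i : ℕ) ≤ t)
    (htt' : t < t') (ht'j : t' < j) (ht : l.count t = 1) : l.count t' ≠ 1 := by
  intro ht'
  obtain ⟨l₁, l₂, rfl, h₁, h₂⟩ := List.exists_eq_append_cons_of_count_eq_one ht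
  simp only [List.count_append, List.count_cons, beq_iff_eq, htt'.ne, if_false] at ht'
  by_cases ht'₁ : t' ∈ l₁
  · refine prod_map_adjSwap_ne_swap_of_split (l₁ := l₂.reverse) (l₂ := l₁.reverse)
      (fun u hu => hl u (by
        simp only [List.mem_append, List.mem_cons, List.mem_reverse] at hu ⊢
        tauto))
      hit htt' ht'j
      (by simpa using List.count_eq_zero.mp (by have := List.count_pos_iff.mpr ht'₁; omega))
      (by simpa using h₁) ?_
    rw [← swap_inv, ← h, ← prod_map_adjSwap_reverse]
    simp
  · exact prod_map_adjSwap_ne_swap_of_split hl hit htt' ht'j ht'₁ h₂ h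

lemma two_mul_sum_sub_le_sum_of_prod_map_adjSwap_eq_swap (w : ℕ → ℝ)
    (hw : ∀ t, t + 1 < n → 0 ≤ w t) {l : List ℕ} (hl : ∀ u ∈ l, u + 1 < n) {i j : Fin n}
    (h : (l.map (adjSwap n)).prod = swap i j) {m : ℕ} (hm : m ∈ Ico (i : ℕ) j)
    (hmax : ∀ u ∈ Ico (i : ℕ) j, w u ≤ w m) :
    2 * ∑ t ∈ Ico (i : ℕ) j, w t - w m ≤ (l.map w).sum := by
  classical
  have hmem {u : ℕ} (hu : u ∈ Ico (i : ℕ) j) : u ∈ l :=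
    mem_of_prod_map_adjSwap_eq_swap hl h (mem_Ico.mp hu).1 (mem_Ico.mp hu).2
  have hcount₂ : ∀ u ∈ Ico (i : ℕ) j, ∀ v ∈ Ico (i : ℕ) j, u ≠ v → l.count u = 1 →
      2 ≤ l.count v := by
    intro u hu v hv huv hcu
    have hv₁ := List.count_pos_iff.mpr (hmem hv)
    suffices l.count v ≠ 1 by omega
    rw [mem_Ico] at hu hv
    rcases huv.lt_or_gt with huv | hvu
    · exact count_ne_one_of_prod_map_adjSwap_eq_swap hl h hu.1 huv hv.2 hcu
    · exact fun hcv => count_ne_one_of_prod_map_adjSwap_eq_swap hl h hv.1 hvu hu.2 hcv hcu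
  calc 2 * ∑ t ∈ Ico (i : ℕ) j, w t - w m ≤ ∑ u ∈ Ico (i : ℕ) j, l.count u • w u :=
        two_mul_sum_sub_le_sum_nsmul _ _ _ hm (fun u hu => hw u (hl u (hmem hu))) hmax
          (fun u hu => List.count_pos_iff.mpr (hmem hu)) hcount₂
    _ ≤ ∑ u ∈ l.toFinset, l.count u • w u :=
        sum_le_sum_of_subset_of_nonneg (fun u hu => List.mem_toFinset.mpr (hmem hu))
          fun u hu _ => nsmul_nonneg (hw u (hl u (List.mem_toFinset.mp hu))) _
    _ = (l.map w).sum := (sum_list_map_count l w).symm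

lemma prod_map_adjSwap_moveWord_apply_self {i j : Fin n} {m : ℕ} (him : (i : ℕ) ≤ m)
    (hmj : m < j) : ((moveWord i m j).map (adjSwap n)).prod m = i := by
  have hfix : (((List.range' (m + 1) (j - (m + 1))).reverse.map (adjSwap n)).prod m) = m :=
    prod_map_adjSwap_apply_of_forall_ne
      (fun u hu => by have := lt_of_mem_moveWord (i := i) hmj (List.mem_append_right _ hu); omega)
      (by omega)
      fun u hu => by rw [List.mem_reverse, List.mem_range'_1] at hu; omega
  rw [moveWord, List.map_append, List.prod_append, Perm.mul_apply, hfix]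
  simpa [show (i : ℕ) + (m - i) = m by omega] using
    prod_map_adjSwap_range'_apply (n := n) (a := i) (k := m - i) (by omega)

lemma prod_map_adjSwap_moveWord_apply_succ {i j : Fin n} {m : ℕ} (hmj : m < j) :
    ((moveWord i m j).map (adjSwap n)).prod ((m + 1 : ℕ) : Fin n) = j := by
  have hup : ((List.range' (m + 1) (j - (m + 1))).map (adjSwap n)).prod j =
      ((m + 1 : ℕ) : Fin n) := by
    simpa [show m + 1 + (j - (m + 1)) = j by omega] using
      prod_map_adjSwap_range'_apply (n := n) (a := m + 1) (k := j - (m + 1)) (by omega)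
  rw [moveWord, List.map_append, List.prod_append, Perm.mul_apply, prod_map_adjSwap_reverse,
    Perm.inv_eq_iff_eq.mpr hup.symm]
  simpa using prod_map_adjSwap_apply_of_forall_ne (x := j)
    (fun u hu => by have := lt_of_mem_moveWord (i := i) hmj (List.mem_append_left _ hu); omega)
    j.isLt fun u hu => by rw [List.mem_range'_1] at hu; omega

lemma prod_map_adjSwap_swapWord {i j : Fin n} {m : ℕ} (him : (i : ℕ) ≤ m) (hmj : m < j) :
    ((swapWord i m j).map (adjSwap n)).prod = swap i j := by
  rw [swapWord, List.map_append, List.map_cons, List.prod_append, List.prod_cons,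
    prod_map_adjSwap_reverse, ← mul_assoc, adjSwap, ← swap_apply_apply,
    prod_map_adjSwap_moveWord_apply_self him hmj, prod_map_adjSwap_moveWord_apply_succ hmj]

-- As elaborated in the statement, `t` ranges over `l` coerced to `List (Fin n)`.
lemma prod_map_swap_eq_prod_map_adjSwap {l : List ℕ} (hl : ∀ t ∈ l, t + 1 < n) :
    (l.map fun t => Equiv.swap (t : Fin n) ((t + 1 : ℕ) : Fin n)).prod =
      (l.map (adjSwap n)).prod := by
  rw [bind_pure_comp, List.map_eq_map, List.map_map]
  congr 1
  refine List.map_congr_left fun t ht => ?_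
  simp only [Function.comp_apply, adjSwap, Fin.val_cast_of_lt (by have := hl t ht; omega : t < n)]

end

/-- with nonnegative weights `w t` on the adjacent transpositions
`swap t (t+1)` of `Fin n` (for `t + 1 < n`), and `i < j` in `Fin n`, the minimum total
weight (with multiplicity) of a decomposition of `swap i j` into adjacent transpositions
equals `2 Σ_{t=i}^{j−1} w t − max_{i ≤ t ≤ j−1} w t`. -/
theorem stmt7 {n : ℕ} [NeZero n] (w : ℕ → ℝ) (hw : ∀ t, t + 1 < n → 0 ≤ w t)
    (i j : Fin n) (hij : i < j) :
    sInf {c : ℝ | ∃ l : List ℕ, (∀ t ∈ l, t + 1 < n) ∧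
        (l.map fun t => Equiv.swap (t : Fin n) ((t + 1 : ℕ) : Fin n)).prod
          = Equiv.swap i j ∧
        (l.map w).sum = c}
      = 2 * (∑ t ∈ Finset.Ico (i : ℕ) (j : ℕ), w t)
        - sSup (w '' Set.Ico (i : ℕ) (j : ℕ)) := by
  obtain ⟨m, hm, hmax⟩ := (Ico (i : ℕ) j).exists_max_image w (nonempty_Ico.mpr hij)
  have hsup : sSup (w '' Set.Ico (i : ℕ) j) = w m := by
    refine IsGreatest.csSup_eq ⟨Set.mem_image_of_mem w (by simpa using hm), ?_⟩
    rintro _ ⟨u, hu, rfl⟩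
    exact hmax u (by simpa using hu)
  rw [hsup]
  refine IsLeast.csInf_eq ⟨?_, ?_⟩
  · obtain ⟨him, hmj⟩ := mem_Ico.mp hm
    have hl : ∀ t ∈ swapWord i m j, t + 1 < n := fun t ht => by
      have := lt_of_mem_swapWord hmj ht
      omega
    exact ⟨_, hl,
      (prod_map_swap_eq_prod_map_adjSwap hl).trans (prod_map_adjSwap_swapWord him hmj),
      sum_map_swapWord w him hmj⟩
  · rintro c ⟨l, hl, hprod, rfl⟩
    exact two_mul_sum_sub_le_sum_of_prod_map_adjSwap_eq_swap w hw hl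
      ((prod_map_swap_eq_prod_map_adjSwap hl).symm.trans hprod) hm hmax
end

section
/- Let σ ∈ S_n be a cycle of length k and let τ be a transposition decomposition of σ consisting of exactly k − 1 transpositions. Then every transposition of τ swaps two elements of the support of σ, the k − 1 swapped pairs are pairwise distinct, and the simple graph on the support of σ whose edges are these k − 1 pairs is a tree (connected and acyclic). -/
/-!
Let `G` be the graph whose edges are the swapped pairs. A transposition moves each point at most
along one edge of `G`, so `x` and `σ x` are joined in `G` and the support of the cycle `σ` lies in
one connected component `C`. A connected graph has at least one edge fewer than vertices, hence
`k - 1 ≥ #{distinct pairs} ≥ #E(G) ≥ #E(G[C]) ≥ |C| - 1 ≥ k - 1`. Equality throughout forces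
`C = supp σ`, every edge of `G` to lie in `C`, the pairs to be distinct, and `G[C]` to be a tree.
-/

open Equiv Finset SimpleGraph

lemma Sym2.toFinset_injective {α : Type*} [DecidableEq α] :
    Function.Injective (Sym2.toFinset : Sym2 α → Finset α) := fun _ _ h =>
  Sym2.ext fun x => by rw [← Sym2.mem_toFinset, h, Sym2.mem_toFinset]

namespace SimpleGraph

variable {V : Type*} {G : SimpleGraph V}

lemma card_edgeSet_induce_le [Finite G.edgeSet] (s : Set V) :
    Nat.card (G.induce s).edgeSet ≤ Nat.card G.edgeSet :=
  Nat.card_le_card_of_injective _ (Embedding.induce s).mapEdgeSet.injective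

lemma mem_of_adj_of_card_edgeSet_induce_eq [Finite G.edgeSet] {s : Set V}
    (h : Nat.card (G.induce s).edgeSet = Nat.card G.edgeSet) {u v : V} (huv : G.Adj u v) :
    u ∈ s := by
  obtain ⟨e, he⟩ := ((Embedding.induce s).mapEdgeSet.injective.bijective_of_nat_card_le
    h.ge).2 ⟨s(u, v), huv⟩
  have hu : u ∈ Sym2.map (↑) e.1 := by
    rw [show Sym2.map (↑) e.1 = s(u, v) from congrArg Subtype.val he]
    exact Sym2.mem_mk_left u v
  obtain ⟨x, -, rfl⟩ := Sym2.mem_map.1 hu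
  exact x.2

lemma isTree_induce_of_card_edgeSet_add_one_le [Finite V] {s : Set V}
    (hs : (G.induce s).Connected) (h : Nat.card G.edgeSet + 1 ≤ Nat.card s) :
    (G.induce s).IsTree ∧ (∀ ⦃u v⦄, G.Adj u v → u ∈ s) ∧ Nat.card s = Nat.card G.edgeSet + 1 := by
  have hind := hs.card_vert_le_card_edgeSet_add_one
  have hle := card_edgeSet_induce_le (G := G) s
  have hE : Nat.card (G.induce s).edgeSet = Nat.card G.edgeSet := by omega
  exact ⟨isTree_iff_connected_and_card.2 ⟨hs, by omega⟩,
    fun _ _ => mem_of_adj_of_card_edgeSet_induce_eq hE, by omega⟩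

lemma reachable_swap_apply_s8 [DecidableEq V] {a b : V} (hab : G.Reachable a b) (x : V) :
    G.Reachable x (swap a b x) := by
  rcases eq_or_ne x a with rfl | hxa
  · simpa using hab
  rcases eq_or_ne x b with rfl | hxb
  · simpa using hab.symm
  · rw [swap_apply_of_ne_of_ne hxa hxb]

lemma reachable_list_prod_swap_apply [DecidableEq V] {l : List (V × V)}
    (hl : ∀ p ∈ l, G.Reachable p.1 p.2) (x : V) :
    G.Reachable x ((l.map fun p => swap p.1 p.2).prod x) := by
  induction l with
  | nil => rfl
  | cons p l ih =>
    rw [List.map_cons, List.prod_cons, Perm.mul_apply]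
    exact (ih fun q hq => hl q (List.mem_cons_of_mem p hq)).trans
      (reachable_swap_apply_s8 (hl p List.mem_cons_self) _)

end SimpleGraph

namespace Equiv.Perm

variable {V : Type*} [Fintype V] {G : SimpleGraph V} {σ : Perm V}

lemma SameCycle.reachable (hG : ∀ x, G.Reachable x (σ x)) {x y : V} (hxy : σ.SameCycle x y) :
    G.Reachable x y := by
  obtain ⟨i, -, rfl⟩ := hxy.exists_pow_eq'
  clear hxy
  induction i with
  | zero => rfl
  | succ i ih => rw [pow_succ', Perm.mul_apply]; exact ih.trans (hG _)

lemma IsCycle.isTree_induce_support [DecidableEq V] (hσ : σ.IsCycle)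
    (hG : ∀ x, G.Reachable x (σ x)) (hcard : Nat.card G.edgeSet + 1 ≤ #σ.support) :
    (G.induce σ.support).IsTree ∧ (∀ ⦃u v⦄, G.Adj u v → u ∈ σ.support) ∧
      #σ.support = Nat.card G.edgeSet + 1 := by
  obtain ⟨a, ha, -⟩ := id hσ
  set C := (G.connectedComponentMk a).supp
  have hsub : (σ.support : Set V) ⊆ C := fun x hx =>
    ConnectedComponent.eq.2 ((hσ.sameCycle ha (mem_support.1 hx)).reachable hG).symm
  have hcardC : #σ.support ≤ Nat.card C := by
    rw [Nat.card_coe_set_eq, ← Set.ncard_coe_finset]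
    exact Set.ncard_le_ncard hsub
  have hconn : (G.induce C).Connected := (G.connectedComponentMk a).connected_toSimpleGraph
  obtain ⟨htree, hmem, hC⟩ := isTree_induce_of_card_edgeSet_add_one_le hconn (hcard.trans hcardC)
  have hCeq : (σ.support : Set V) = C := by
    refine Set.eq_of_subset_of_ncard_le hsub ?_ (Set.toFinite C)
    rw [Set.ncard_coe_finset, ← Nat.card_coe_set_eq]
    omega
  refine ⟨hCeq ▸ htree, fun u v huv => ?_, by omega⟩
  simpa [← hCeq] using hmem huv

end Equiv.Perm

section TranspositionGraph

variable {V : Type*} {l : List (V × V)}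

def transpositionGraph (l : List (V × V)) : SimpleGraph V :=
  fromRel fun u v => (u, v) ∈ l ∨ (v, u) ∈ l

lemma transpositionGraph_adj_of_mem (hne : ∀ p ∈ l, p.1 ≠ p.2) {p : V × V} (hp : p ∈ l) :
    (transpositionGraph l).Adj p.1 p.2 :=
  ⟨hne p hp, Or.inl (Or.inl hp)⟩

lemma edgeSet_transpositionGraph [DecidableEq V] (hne : ∀ p ∈ l, p.1 ≠ p.2) :
    (transpositionGraph l).edgeSet = (l.map fun p => s(p.1, p.2)).toFinset := by
  ext e
  induction e using Sym2.ind with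
  | _ u v =>
    simp only [mem_edgeSet, transpositionGraph, fromRel_adj, Finset.mem_coe,
      List.mem_toFinset, List.mem_map, Sym2.eq_iff, Prod.exists]
    constructor
    · rintro ⟨-, (h | h) | (h | h)⟩ <;> exact ⟨_, _, h, by simp⟩
    · rintro ⟨a, b, hab, ⟨rfl, rfl⟩ | ⟨rfl, rfl⟩⟩
      exacts [⟨hne _ hab, by simp [hab]⟩, ⟨(hne _ hab).symm, by simp [hab]⟩]

lemma card_edgeSet_transpositionGraph [DecidableEq V] (hne : ∀ p ∈ l, p.1 ≠ p.2) :
    Nat.card (transpositionGraph l).edgeSet = #(l.map fun p => s(p.1, p.2)).toFinset := by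
  rw [edgeSet_transpositionGraph hne, Nat.card_coe_set_eq, Set.ncard_coe_finset]

end TranspositionGraph

theorem stmt8_general {n k : ℕ}
    (σ : Equiv.Perm (Fin n)) (hσ : σ.IsCycle) (hsupp : σ.support.card = k)
    (l : List (Fin n × Fin n)) (hne : ∀ p ∈ l, p.1 ≠ p.2)
    (hlen : l.length = k - 1)
    (hprod : (l.map fun p => Equiv.swap p.1 p.2).prod = σ) :
    (∀ p ∈ l, p.1 ∈ σ.support ∧ p.2 ∈ σ.support) ∧
    (l.map fun p => ({p.1, p.2} : Finset (Fin n))).Nodup ∧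
    ((SimpleGraph.fromRel fun u v => (u, v) ∈ l ∨ (v, u) ∈ l).induce
      (↑σ.support : Set (Fin n))).IsTree := by
  have hreach (x : Fin n) : (transpositionGraph l).Reachable x (σ x) := hprod ▸
    reachable_list_prod_swap_apply (fun p hp => (transpositionGraph_adj_of_mem hne hp).reachable) x
  -- `k ≥ 2`, so `k - 1` in `hlen` does not truncate
  have hk := hσ.two_le_card_support
  have hE := card_edgeSet_transpositionGraph hne
  have hpairs := List.toFinset_card_le (l.map fun p => s(p.1, p.2))
  rw [List.length_map] at hpairs
  obtain ⟨htree, hmem, hcard⟩ := hσ.isTree_induce_support hreach (by omega)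
  refine ⟨fun p hp => ⟨hmem (transpositionGraph_adj_of_mem hne hp),
    hmem (transpositionGraph_adj_of_mem hne hp).symm⟩, ?_, htree⟩
  have hnodup : (l.map fun p => s(p.1, p.2)).Nodup := by
    rw [← Multiset.coe_nodup, ← Multiset.toFinset_card_eq_card_iff_nodup, List.toFinset_coe,
      Multiset.coe_card, List.length_map]
    omega
  simpa only [List.map_map, Function.comp_def, Sym2.toFinset_mk_eq] using
    hnodup.map Sym2.toFinset_injective

/-- let `σ` be a cycle of length `k` and let `τ` (the list `l` of swapped
pairs) be a transposition decomposition of `σ` with exactly `k − 1` transpositions.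
Then every transposition of `τ` swaps two elements of the support of `σ`, the `k − 1`
swapped (unordered) pairs are pairwise distinct, and the simple graph on the support
of `σ` whose edges are these pairs is a tree. -/
theorem stmt8 {n k : ℕ} (hk : 2 ≤ k)
    (σ : Equiv.Perm (Fin n)) (hσ : σ.IsCycle) (hsupp : σ.support.card = k)
    (l : List (Fin n × Fin n)) (hne : ∀ p ∈ l, p.1 ≠ p.2)
    (hlen : l.length = k - 1)
    (hprod : (l.map fun p => Equiv.swap p.1 p.2).prod = σ) :
    (∀ p ∈ l, p.1 ∈ σ.support ∧ p.2 ∈ σ.support) ∧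
    (l.map fun p => ({p.1, p.2} : Finset (Fin n))).Nodup ∧
    ((SimpleGraph.fromRel fun u v => (u, v) ∈ l ∨ (v, u) ∈ l).induce
      (↑σ.support : Set (Fin n))).IsTree :=
  stmt8_general σ hσ hsupp l hne hlen hprod
end

section
/- Let 2 ≤ k ≤ n and let T be a set of k − 1 two-element subsets of {1,…,k} such that the simple graph on {1,…,k} with edge set T is a tree, and T is noncrossing: for all {a_1,a_2}, {b_1,b_2} ∈ T with a_1 < a_2 and b_1 < b_2, if a_1 < b_1 < a_2 then b_2 ≤ a_2. Then there exists an ordering t_{k−1}, …, t_1 of the transpositions corresponding to the edges of T such that t_{k−1} ∘ ⋯ ∘ t_1 equals the cycle (1 2 ⋯ k) (the permutation sending i to i+1 for 1 ≤ i < k, sending k to 1, and fixing all other elements of {1,…,n}). -/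
/-!
Induction on the number of vertices. A noncrossing tree with at least two vertices has a leaf `v`
whose neighbour `w` is next to `v` in the increasing order of the vertices. For the sorted vertex
list `L`, the cycle `L.formPerm` is `(v w) * (L.erase v).formPerm` if `v < w` and
`(L.erase v).formPerm * (w v)` if `w < v`, so the transposition of the leaf edge is placed first
or last in the factorisation obtained for the tree with `v` deleted.
-/

open Equiv Finset

variable {α : Type*}

theorem Finset.exists_ne_eq_pair_of_card_eq_two [DecidableEq α] {e : Finset α} (he : #e = 2)
    {c : α} (hc : c ∈ e) : ∃ o, o ≠ c ∧ e = {c, o} := by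
  obtain ⟨x, y, hxy, rfl⟩ := card_eq_two.1 he
  rcases mem_insert.1 hc with rfl | hc
  · exact ⟨y, hxy.symm, rfl⟩
  · rw [mem_singleton.1 hc]
    exact ⟨x, hxy, pair_comm x y⟩

theorem Finset.card_inter_le_of_card_eq_two [DecidableEq α] {A B e : Finset α} (he : #e = 2)
    (hB : (A ∩ e).Nonempty → e ⊆ B) :
    #(A ∩ e) ≤ (if e ⊆ B then 1 else 0) + (if e ⊆ A then 1 else 0) := by
  by_cases heB : e ⊆ B
  · by_cases heA : e ⊆ A
    · simpa [heA, heB, he] using card_le_card (inter_subset_right (s₁ := A) (s₂ := e))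
    · have : #(A ∩ e) < #e :=
        card_lt_card ⟨inter_subset_right, fun h ↦ heA (h.trans inter_subset_left)⟩
      simp only [heB, heA, if_true, if_false]
      omega
  · rw [not_nonempty_iff_eq_empty.1 (mt hB heB), card_empty]
    exact Nat.zero_le _

theorem Set.mem_uIoo_of_mem_uIcc [LinearOrder α] {a b x : α} (hx : x ∈ uIcc a b) (ha : x ≠ a)
    (hb : x ≠ b) : x ∈ uIoo a b := by
  rcases le_total a b with h | h
  · rw [uIcc_of_le h] at hx
    rw [uIoo_of_le h]
    exact ⟨lt_of_le_of_ne hx.1 ha.symm, lt_of_le_of_ne hx.2 hb⟩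
  · rw [uIcc_of_ge h] at hx
    rw [uIoo_of_ge h]
    exact ⟨lt_of_le_of_ne hx.1 hb.symm, lt_of_le_of_ne hx.2 ha⟩

def Noncrossing [LinearOrder α] (T : Finset (Finset α)) : Prop :=
  ∀ a₁ a₂ b₁ b₂ : α, {a₁, a₂} ∈ T → {b₁, b₂} ∈ T →
    a₁ < a₂ → b₁ < b₂ → a₁ < b₁ → b₁ < a₂ → b₂ ≤ a₂

theorem Noncrossing.mono [LinearOrder α] {T T' : Finset (Finset α)} (hT : Noncrossing T)
    (h : T' ⊆ T) : Noncrossing T' :=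
  fun a₁ a₂ b₁ b₂ ha hb ↦ hT a₁ a₂ b₁ b₂ (h ha) (h hb)

theorem Noncrossing.mem_Icc_of_mem_Ioo [LinearOrder α] {T : Finset (Finset α)}
    (hT : Noncrossing T) {a b c o : α} (hab : {a, b} ∈ T) (hco : {c, o} ∈ T) (hlt : a < b)
    (hc : c ∈ Set.Ioo a b) : o ∈ Set.Icc a b := by
  rcases lt_trichotomy c o with h | rfl | h
  · exact ⟨hc.1.le.trans h.le, hT a b c o hab hco hlt h hc.1 hc.2⟩
  · exact Set.Ioo_subset_Icc_self hc
  · refine ⟨not_lt.1 fun hoa ↦ ?_, h.le.trans hc.2.le⟩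
    exact (hT o c a b (pair_comm o c ▸ hco) hab h hlt hoa hc.1).not_gt hc.2

theorem Noncrossing.mem_uIcc_of_mem_uIoo [LinearOrder α] {T : Finset (Finset α)}
    (hT : Noncrossing T) {v w c o : α} (hvw : {v, w} ∈ T) (hco : {c, o} ∈ T)
    (hc : c ∈ Set.uIoo v w) : o ∈ Set.uIcc v w := by
  rcases le_total v w with h | h
  · rw [Set.uIoo_of_le h] at hc
    rw [Set.uIcc_of_le h]
    exact hT.mem_Icc_of_mem_Ioo hvw hco (hc.1.trans hc.2) hc
  · rw [Set.uIoo_of_ge h] at hc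
    rw [Set.uIcc_of_ge h]
    exact hT.mem_Icc_of_mem_Ioo (pair_comm v w ▸ hvw) hco (hc.1.trans hc.2) hc

theorem Noncrossing.eq_or_mem_uIoo [LinearOrder α] {T : Finset (Finset α)} (hT : Noncrossing T)
    {v w c o : α} (hvw : {v, w} ∈ T) (hleaf : ∀ e ∈ T, v ∈ e → e = {v, w}) (hco : {c, o} ∈ T)
    (hc : c ∈ Set.uIoo v w) : o = w ∨ o ∈ Set.uIoo v w := by
  have hov : o ≠ v := by
    rintro rfl
    rcases mem_insert.1 (hleaf _ hco (by simp) ▸ mem_insert_self c {o}) with rfl | hcw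
    · exact Set.left_notMem_uIoo hc
    · exact Set.right_notMem_uIoo (mem_singleton.1 hcw ▸ hc)
  by_cases how : o = w
  · exact .inl how
  · exact .inr (Set.mem_uIoo_of_mem_uIcc (hT.mem_uIcc_of_mem_uIoo hvw hco hc) hov how)

/-- Acyclicity is encoded by counting: no nonempty `A ⊆ S` spans `#A` edges. -/
structure IsTreeOn [DecidableEq α] (S : Finset α) (T : Finset (Finset α)) : Prop where
  card_eq_two : ∀ e ∈ T, #e = 2
  subset : ∀ e ∈ T, e ⊆ S
  card_add_one : #T + 1 = #S
  card_filter_subset_lt : ∀ A ⊆ S, A.Nonempty → #{e ∈ T | e ⊆ A} < #A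

namespace IsTreeOn

section

variable [DecidableEq α] {S : Finset α} {T : Finset (Finset α)}

theorem one_le_card_filter_mem (h : IsTreeOn S T) (hS : 2 ≤ #S) {v : α} (hv : v ∈ S) :
    1 ≤ #{e ∈ T | v ∈ e} := by
  by_contra! hdeg
  have hv' : ∀ e ∈ T, v ∉ e := by simpa using hdeg
  have hT : {e ∈ T | e ⊆ S.erase v} = T :=
    filter_true_of_mem fun e he x hx ↦ mem_erase.2 ⟨fun hxv ↦ hv' e he (hxv ▸ hx), h.subset e he hx⟩
  have := h.card_filter_subset_lt (S.erase v) (erase_subset v S)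
    (by rw [← card_pos, card_erase_of_mem hv]; omega)
  rw [hT, card_erase_of_mem hv] at this
  have := h.card_add_one
  omega

theorem exists_edge_of_card_filter_mem_eq_one (h : IsTreeOn S T) {v : α}
    (hv : #{e ∈ T | v ∈ e} = 1) : ∃ w, {v, w} ∈ T ∧ ∀ e ∈ T, v ∈ e → e = {v, w} := by
  obtain ⟨f, hf⟩ := card_eq_one.1 hv
  obtain ⟨hfT, hvf⟩ := mem_filter.1 (hf ▸ mem_singleton_self f)
  obtain ⟨w, -, rfl⟩ := exists_ne_eq_pair_of_card_eq_two (h.card_eq_two f hfT) hvf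
  exact ⟨w, hfT, fun e he hve ↦ mem_singleton.1 (hf ▸ mem_filter.2 ⟨he, hve⟩)⟩

/-- A vertex set `A` attached to the rest of the tree through at most one vertex (`B \ A`)
contains a leaf: otherwise the degrees in `A` would add up to at least `2 * #A`, while they add up
to at most the number of edges inside `B` plus the number inside `A`, hence to at most
`2 * #A - 1`. -/
theorem exists_card_filter_mem_eq_one (h : IsTreeOn S T) (hS : 2 ≤ #S) {A B : Finset α}
    (hA : A.Nonempty) (hAB : A ⊆ B) (hBS : B ⊆ S) (hBA : #B ≤ #A + 1)
    (hclosed : ∀ e ∈ T, (A ∩ e).Nonempty → e ⊆ B) : ∃ c ∈ A, #{e ∈ T | c ∈ e} = 1 := by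
  by_contra! hleaf
  have hdeg : ∀ c ∈ A, 2 ≤ #{e ∈ T | c ∈ e} := fun c hc ↦
    lt_of_le_of_ne (h.one_le_card_filter_mem hS (hBS (hAB hc))) (hleaf c hc).symm
  have hsum : ∑ e ∈ T, #(A ∩ e) ≤ #{e ∈ T | e ⊆ B} + #{e ∈ T | e ⊆ A} := by
    calc ∑ e ∈ T, #(A ∩ e)
        ≤ ∑ e ∈ T, ((if e ⊆ B then 1 else 0) + (if e ⊆ A then 1 else 0)) :=
          sum_le_sum fun e he ↦ card_inter_le_of_card_eq_two (h.card_eq_two e he) (hclosed e he)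
      _ = #{e ∈ T | e ⊆ B} + #{e ∈ T | e ⊆ A} := by
          rw [sum_add_distrib, card_filter, card_filter]
  have := le_sum_card_inter hdeg
  have := h.card_filter_subset_lt B hBS (hA.mono hAB)
  have := h.card_filter_subset_lt A (hAB.trans hBS) hA
  omega

theorem erase_leaf (h : IsTreeOn S T) {v w : α} (he : {v, w} ∈ T)
    (hleaf : ∀ e ∈ T, v ∈ e → e = {v, w}) : IsTreeOn (S.erase v) (T.erase {v, w}) where
  card_eq_two e he' := h.card_eq_two e (mem_of_mem_erase he')
  subset e he' x hx := mem_erase.2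
    ⟨fun hxv ↦ (mem_erase.1 he').1 (hleaf e (mem_of_mem_erase he') (hxv ▸ hx)),
      h.subset e (mem_of_mem_erase he') hx⟩
  card_add_one := by
    have := h.card_add_one
    rw [card_erase_of_mem he, card_erase_of_mem (h.subset _ he (mem_insert_self v {w}))]
    have := card_pos.2 ⟨_, he⟩
    omega
  card_filter_subset_lt A hA hAne :=
    (card_le_card (filter_subset_filter _ (erase_subset _ _))).trans_lt
      (h.card_filter_subset_lt A (hA.trans (erase_subset _ _)) hAne)

end

variable [LinearOrder α] {S : Finset α} {T : Finset (Finset α)}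

/-- Take a leaf edge `{v, w}` spanning the fewest vertices of `S`. By noncrossing, the vertices
strictly between `v` and `w` are attached to the rest of the tree only through `w`, so if there
were any, one of them would be a leaf whose edge spans fewer vertices. -/
theorem exists_leaf_forall_notMem_uIoo (h : IsTreeOn S T) (hnc : Noncrossing T) (hS : 2 ≤ #S) :
    ∃ v w, {v, w} ∈ T ∧ (∀ e ∈ T, v ∈ e → e = {v, w}) ∧ ∀ x ∈ S, x ∉ Set.uIoo v w := by
  classical
  set P := {p ∈ S ×ˢ S | {p.1, p.2} ∈ T ∧ ∀ e ∈ T, p.1 ∈ e → e = {p.1, p.2}}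
  have hP : P.Nonempty := by
    obtain ⟨v, hv, hleaf⟩ := h.exists_card_filter_mem_eq_one hS (card_pos.1 (by omega))
      subset_rfl subset_rfl le_self_add fun e he _ ↦ h.subset e he
    obtain ⟨w, hvw, huniq⟩ := h.exists_edge_of_card_filter_mem_eq_one hleaf
    exact ⟨(v, w), mem_filter.2 ⟨mem_product.2 ⟨hv, h.subset _ hvw (by simp)⟩, hvw, huniq⟩⟩
  obtain ⟨⟨v, w⟩, hvwP, hmin⟩ := exists_min_image P (fun p ↦ #{x ∈ S | x ∈ Set.uIoo p.1 p.2}) hP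
  obtain ⟨-, hvw, hleaf⟩ := mem_filter.1 hvwP
  refine ⟨v, w, hvw, hleaf, fun x hxS hx ↦ ?_⟩
  set A := {x ∈ S | x ∈ Set.uIoo v w}
  have hclosed : ∀ e ∈ T, (A ∩ e).Nonempty → e ⊆ insert w A := by
    rintro e he ⟨c, hc⟩
    obtain ⟨hcA, hce⟩ := mem_inter.1 hc
    obtain ⟨o, -, rfl⟩ := exists_ne_eq_pair_of_card_eq_two (h.card_eq_two e he) hce
    refine insert_subset (mem_insert_of_mem hcA) (singleton_subset_iff.2 ?_)
    rcases hnc.eq_or_mem_uIoo hvw hleaf he (mem_filter.1 hcA).2 with rfl | ho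
    · exact mem_insert_self o A
    · exact mem_insert_of_mem (mem_filter.2 ⟨h.subset _ he (by simp), ho⟩)
  obtain ⟨c, hcA, hcleaf⟩ := h.exists_card_filter_mem_eq_one hS ⟨x, mem_filter.2 ⟨hxS, hx⟩⟩
    (subset_insert w A) (insert_subset (h.subset _ hvw (by simp)) (filter_subset _ S))
    (card_insert_le w A) hclosed
  obtain ⟨o, hco, hcuniq⟩ := h.exists_edge_of_card_filter_mem_eq_one hcleaf
  have hcI : c ∈ Set.uIcc v w := Set.uIoo_subset_uIcc_self (mem_filter.1 hcA).2
  have hoI : o ∈ Set.uIcc v w := by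
    rcases hnc.eq_or_mem_uIoo hvw hleaf hco (mem_filter.1 hcA).2 with rfl | ho
    · exact Set.right_mem_uIcc
    · exact Set.uIoo_subset_uIcc_self ho
  have hlt : #{x ∈ S | x ∈ Set.uIoo c o} < #A := by
    refine card_lt_card ⟨fun y hy ↦ ?_, fun hsub ↦ ?_⟩
    · exact mem_filter.2 ⟨(mem_filter.1 hy).1, Set.uIoo_subset_Ioo hcI hoI (mem_filter.1 hy).2⟩
    · exact Set.left_notMem_uIoo (mem_filter.1 (hsub hcA)).2
  exact hlt.not_ge (hmin (c, o) (mem_filter.2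
    ⟨mem_product.2 ⟨(mem_filter.1 hcA).1, h.subset _ hco (by simp)⟩, hco, hcuniq⟩))

end IsTreeOn

namespace List

theorem formPerm_eq_swap_mul_formPerm_erase [DecidableEq α] {l₁ l₂ : List α} {v w : α}
    (h : (l₁ ++ v :: w :: l₂).Nodup) :
    (l₁ ++ v :: w :: l₂).formPerm = Equiv.swap v w * ((l₁ ++ v :: w :: l₂).erase v).formPerm := by
  have hv : v ∉ l₁ := fun hv ↦ disjoint_of_nodup_append h hv mem_cons_self
  have h' : (l₁ ++ w :: l₂).Nodup := h.sublist ((sublist_cons_self v _).append_left l₁)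
  rw [erase_append_right _ hv, erase_cons_head, ← formPerm_rotate _ h l₁.length,
    ← formPerm_rotate _ h' l₁.length, rotate_append_length_eq, rotate_append_length_eq,
    cons_append, cons_append, formPerm_cons_cons]

theorem formPerm_eq_formPerm_erase_mul_swap [DecidableEq α] {l₁ l₂ : List α} {u v : α}
    (h : (l₁ ++ u :: v :: l₂).Nodup) :
    (l₁ ++ u :: v :: l₂).formPerm = ((l₁ ++ u :: v :: l₂).erase v).formPerm * Equiv.swap u v := by
  have hv : v ∉ l₁ := fun hv ↦ disjoint_of_nodup_append h hv (mem_cons_of_mem u mem_cons_self)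
  have huv : u ≠ v := fun huv ↦ (nodup_cons.1 h.of_append_right).1 (huv ▸ mem_cons_self)
  rw [erase_append_right _ hv, erase_cons_tail (by simpa using huv), erase_cons_head]
  have h₁ : (l₁ ++ [u, v] ++ l₂).Nodup := by simpa using h
  have h₂ : (l₁ ++ [u] ++ l₂).Nodup := by simpa using h.sublist ((cons_sublist_cons.2
    (sublist_cons_self v l₂)).append_left l₁)
  have e₁ : l₁ ++ u :: v :: l₂ = l₁ ++ [u, v] ++ l₂ := by simp
  have e₂ : l₁ ++ u :: l₂ = l₁ ++ [u] ++ l₂ := by simp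
  rw [e₁, e₂, ← formPerm_rotate _ h₁ (l₁ ++ [u, v]).length,
    ← formPerm_rotate _ h₂ (l₁ ++ [u]).length, rotate_append_length_eq, rotate_append_length_eq,
    ← append_assoc, ← append_assoc, formPerm_append_pair]

theorem Pairwise.exists_eq_append_cons_cons [LinearOrder α] {L : List α}
    (hL : L.Pairwise (· < ·)) {a b : α} (ha : a ∈ L) (hb : b ∈ L) (hab : a < b)
    (hgap : ∀ x ∈ L, x ∉ Set.Ioo a b) : ∃ l₁ l₂, L = l₁ ++ a :: b :: l₂ := by
  obtain ⟨l₁, r, rfl⟩ := append_of_mem ha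
  obtain ⟨-, hr, hl₁⟩ := pairwise_append.1 hL
  have hbr : b ∈ r := by
    rcases mem_append.1 hb with hb | hb
    · exact absurd (hl₁ b hb a mem_cons_self) hab.not_gt
    · exact (mem_cons.1 hb).resolve_left hab.ne'
  obtain ⟨c, l₂, rfl⟩ := exists_cons_of_ne_nil (ne_nil_of_mem hbr)
  obtain ⟨har, hcr⟩ := pairwise_cons.1 hr
  have hcb : c ≤ b := by
    rcases mem_cons.1 hbr with rfl | hb
    · exact le_rfl
    · exact ((pairwise_cons.1 hcr).1 b hb).le
  have hbc : b ≤ c := not_lt.1 fun hcb' ↦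
    hgap c (mem_append_right l₁ (mem_cons_of_mem a mem_cons_self)) ⟨har c mem_cons_self, hcb'⟩
  exact ⟨l₁, l₂, by rw [le_antisymm hcb hbc]⟩

end List

def IsEdgeSwapProduct [DecidableEq α] (T : Finset (Finset α)) (π : Perm α) : Prop :=
  ∃ l : List (α × α), (∀ p ∈ l, p.1 ≠ p.2) ∧
    (↑(l.map fun p ↦ ({p.1, p.2} : Finset α)) : Multiset (Finset α)) = T.val ∧
    (l.map fun p ↦ swap p.1 p.2).prod = π

namespace IsEdgeSwapProduct

variable [DecidableEq α] {T : Finset (Finset α)} {π : Perm α} {v w : α}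

theorem empty : IsEdgeSwapProduct (∅ : Finset (Finset α)) 1 :=
  ⟨[], by simp, rfl, rfl⟩

theorem swap_mul (h : IsEdgeSwapProduct (T.erase {v, w}) π) (hvw : v ≠ w) (he : {v, w} ∈ T) :
    IsEdgeSwapProduct T (swap v w * π) := by
  obtain ⟨l, hne, hT, hprod⟩ := h
  refine ⟨(v, w) :: l, List.forall_mem_cons.2 ⟨hvw, hne⟩, ?_, by simp [hprod]⟩
  rw [List.map_cons, ← Multiset.cons_coe, hT, erase_val, Multiset.cons_erase he]

theorem mul_swap (h : IsEdgeSwapProduct (T.erase {v, w}) π) (hvw : v ≠ w) (he : {v, w} ∈ T) :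
    IsEdgeSwapProduct T (π * swap v w) := by
  obtain ⟨l, hne, hT, hprod⟩ := h
  refine ⟨l ++ [(v, w)], fun p hp ↦ (List.mem_append.1 hp).elim (hne p)
    fun hp ↦ List.mem_singleton.1 hp ▸ hvw, ?_, by simp [hprod]⟩
  rw [List.map_append, List.map_singleton, Multiset.coe_eq_coe.2 (List.perm_append_singleton _ _),
    ← Multiset.cons_coe, hT, erase_val, Multiset.cons_erase he]

end IsEdgeSwapProduct

theorem IsTreeOn.isEdgeSwapProduct_formPerm [LinearOrder α] {T : Finset (Finset α)}
    {L : List α} (hL : L.Pairwise (· < ·)) (h : IsTreeOn L.toFinset T) (hnc : Noncrossing T) :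
    IsEdgeSwapProduct T L.formPerm := by
  have hnd : L.Nodup := hL.imp ne_of_lt
  rcases lt_or_ge #L.toFinset 2 with hS | hS
  · have := h.card_add_one
    rw [card_eq_zero.1 (by omega : #T = 0),
      (List.formPerm_eq_one_iff _ hnd).2 (by rw [← List.toFinset_card_of_nodup hnd]; omega)]
    exact .empty
  obtain ⟨v, w, he, hleaf, hgap⟩ := h.exists_leaf_forall_notMem_uIoo hnc hS
  have hvw : v ≠ w := by rintro rfl; simpa using h.card_eq_two _ he
  have hvL : v ∈ L := List.mem_toFinset.1 (h.subset _ he (mem_insert_self v {w}))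
  have hwL : w ∈ L := List.mem_toFinset.1 (h.subset _ he (by simp))
  have hrest : IsEdgeSwapProduct (T.erase {v, w}) (L.erase v).formPerm := by
    refine IsTreeOn.isEdgeSwapProduct_formPerm (hL.sublist List.erase_sublist) ?_
      (hnc.mono (erase_subset _ _))
    have : (L.erase v).toFinset = L.toFinset.erase v := by
      ext x
      simp [hnd.mem_erase_iff]
    exact this ▸ h.erase_leaf he hleaf
  have hgap' : ∀ x ∈ L, x ∉ Set.uIoo v w := fun x hx ↦ hgap x (List.mem_toFinset.2 hx)
  rcases hvw.lt_or_gt with hlt | hgt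
  · rw [Set.uIoo_of_lt hlt] at hgap'
    obtain ⟨l₁, l₂, rfl⟩ := hL.exists_eq_append_cons_cons hvL hwL hlt hgap'
    rw [List.formPerm_eq_swap_mul_formPerm_erase hnd]
    exact hrest.swap_mul hvw he
  · rw [Set.uIoo_of_gt hgt] at hgap'
    obtain ⟨l₁, l₂, rfl⟩ := hL.exists_eq_append_cons_cons hwL hvL hgt hgap'
    rw [List.formPerm_eq_formPerm_erase_mul_swap hnd, swap_comm]
    exact hrest.mul_swap hvw he
termination_by L.length
decreasing_by
  rw [List.length_erase_of_mem hvL]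
  exact Nat.sub_lt (List.length_pos_of_mem hvL) one_pos

theorem SimpleGraph.IsAcyclic.card_edgeFinset_lt {V : Type*} [Fintype V] [Nonempty V]
    {G : SimpleGraph V} [Fintype G.edgeSet] (hG : G.IsAcyclic) :
    #G.edgeFinset < Fintype.card V := by
  classical
  obtain ⟨F, hGF, -, hF⟩ := connected_top.exists_isTree_le_of_le_of_isAcyclic le_top hG
  have := hF.card_edgeFinset
  have := card_le_card (edgeFinset_mono hGF)
  omega

theorem card_filter_subset_lt_of_isAcyclic [DecidableEq α] {T : Finset (Finset α)}
    (hT : ∀ e ∈ T, #e = 2) {A : Finset α} (hA : A.Nonempty)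
    (hG : ((SimpleGraph.fromRel fun u v ↦ ({u, v} : Finset α) ∈ T).induce (A : Set α)).IsAcyclic) :
    #{e ∈ T | e ⊆ A} < #A := by
  classical
  have : Nonempty (A : Set α) := hA.to_subtype
  refine lt_of_le_of_lt ?_ ((hG.card_edgeFinset_lt).trans_eq (by simp))
  refine card_le_card_of_surjOn (Sym2.lift ⟨fun x y ↦ {x.1, y.1}, fun x y ↦ pair_comm _ _⟩) ?_
  intro e he
  obtain ⟨heT, heA⟩ := mem_filter.1 he
  obtain ⟨x, y, hxy, rfl⟩ := card_eq_two.1 (hT _ heT)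
  refine ⟨s(⟨x, heA (by simp)⟩, ⟨y, heA (by simp)⟩), ?_, rfl⟩
  simpa [hxy] using Or.inl heT

namespace Fin

variable {n k : ℕ} [NeZero n]

theorem pairwise_lt_map_ofNat_range (hkn : k ≤ n) :
    ((List.range k).map (Fin.ofNat n)).Pairwise (· < ·) := by
  refine List.pairwise_map.2 (List.pairwise_lt_range.imp_of_mem fun hi hj hij ↦ ?_)
  rw [Fin.lt_def, val_ofNat, val_ofNat, Nat.mod_eq_of_lt ((List.mem_range.1 hi).trans_le hkn),
    Nat.mod_eq_of_lt ((List.mem_range.1 hj).trans_le hkn)]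
  exact hij

theorem mem_map_ofNat_range (hkn : k ≤ n) {x : Fin n} :
    x ∈ (List.range k).map (Fin.ofNat n) ↔ (x : ℕ) < k := by
  simp only [List.mem_map, List.mem_range]
  refine ⟨?_, fun hx ↦ ⟨x, hx, ofNat_val_eq_self x⟩⟩
  rintro ⟨i, hi, rfl⟩
  rwa [val_ofNat, Nat.mod_eq_of_lt (hi.trans_le hkn)]

theorem formPerm_map_ofNat_range (hkn : k ≤ n) (σ : Perm (Fin n))
    (hσ1 : ∀ i : Fin n, (i : ℕ) + 1 < k → σ i = Fin.ofNat n ((i : ℕ) + 1))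
    (hσ2 : σ (Fin.ofNat n (k - 1)) = Fin.ofNat n 0) (hσ3 : ∀ i : Fin n, k ≤ (i : ℕ) → σ i = i) :
    ((List.range k).map (Fin.ofNat n)).formPerm = σ := by
  set L := (List.range k).map (Fin.ofNat n)
  have hnd : L.Nodup := (pairwise_lt_map_ofNat_range hkn).imp ne_of_lt
  ext1 x
  by_cases hx : (x : ℕ) < k
  · have hlen : (x : ℕ) < L.length := by simpa [L] using hx
    have hxL : L[(x : ℕ)] = x := by simp [L]
    rw [← hxL, List.formPerm_apply_getElem L hnd _ hlen]
    simp only [L, List.getElem_map, List.getElem_range, List.length_map, List.length_range]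
    rw [ofNat_val_eq_self]
    rcases (show (x : ℕ) + 1 ≤ k from hx).lt_or_eq with hx1 | hx1
    · rw [Nat.mod_eq_of_lt hx1, hσ1 x hx1]
    · have hxk : x = Fin.ofNat n (k - 1) := by
        ext
        rw [val_ofNat, Nat.mod_eq_of_lt (by omega)]
        omega
      rw [hx1, Nat.mod_self, ← hσ2, hxk]
  · rw [List.formPerm_apply_of_notMem (mt (mem_map_ofNat_range hkn).1 hx), hσ3 x (not_lt.1 hx)]

end Fin

/-- (elements of `{1,…,n}` modeled as `Fin n`, `0`-indexed) let `T` be a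
set of `k − 1` two-element subsets of `{0,…,k−1}` forming a tree on `{0,…,k−1}` and
noncrossing.  Then the transpositions corresponding to the edges of `T` can be ordered
so that their product is the cycle `σ = (0 1 ⋯ k−1)`. -/
theorem stmt10 {n k : ℕ} [NeZero n] (hk2 : 2 ≤ k) (hkn : k ≤ n)
    (σ : Equiv.Perm (Fin n))
    (hσ1 : ∀ i : Fin n, (i : ℕ) + 1 < k → σ i = (Fin.ofNat n ((i : ℕ) + 1 : ℕ)))
    (hσ2 : σ (Fin.ofNat n (k - 1 : ℕ)) = (Fin.ofNat n (0 : ℕ)))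
    (hσ3 : ∀ i : Fin n, k ≤ (i : ℕ) → σ i = i)
    (T : Finset (Finset (Fin n)))
    (hcard : T.card = k - 1)
    (hedges : ∀ e ∈ T, e.card = 2 ∧ ∀ x ∈ e, (x : ℕ) < k)
    (htree : ((SimpleGraph.fromRel fun u v => ({u, v} : Finset (Fin n)) ∈ T).induce
        {x : Fin n | (x : ℕ) < k}).IsTree)
    (hnc : ∀ a₁ a₂ b₁ b₂ : Fin n,
        ({a₁, a₂} : Finset (Fin n)) ∈ T → ({b₁, b₂} : Finset (Fin n)) ∈ T →
        a₁ < a₂ → b₁ < b₂ → a₁ < b₁ → b₁ < a₂ → b₂ ≤ a₂) :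
    ∃ l : List (Fin n × Fin n),
      (∀ p ∈ l, p.1 ≠ p.2) ∧
      (↑(l.map fun p => ({p.1, p.2} : Finset (Fin n))) : Multiset (Finset (Fin n)))
        = T.val ∧
      (l.map fun p => Equiv.swap p.1 p.2).prod = σ := by
  set L := (List.range k).map (Fin.ofNat n)
  have hL : L.Pairwise (· < ·) := Fin.pairwise_lt_map_ofNat_range hkn
  have hmem (x : Fin n) : x ∈ L.toFinset ↔ (x : ℕ) < k :=
    List.mem_toFinset.trans (Fin.mem_map_ofNat_range hkn)
  have hT : IsTreeOn L.toFinset T := by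
    refine ⟨fun e he ↦ (hedges e he).1, fun e he x hx ↦ (hmem x).2 ((hedges e he).2 x hx), ?_,
      fun A hA hAne ↦ card_filter_subset_lt_of_isAcyclic (fun e he ↦ (hedges e he).1) hAne
        (htree.isAcyclic.embedding (SimpleGraph.induceHomOfLE _ fun x hx ↦ (hmem x).1 (hA hx)))⟩
    rw [List.toFinset_card_of_nodup (hL.imp ne_of_lt), List.length_map, List.length_range]
    omega
  rw [← Fin.formPerm_map_ofNat_range hkn σ hσ1 hσ2 hσ3]
  exact hT.isEdgeSwapProduct_formPerm hL hnc
end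

section
/- Let σ ∈ S_n be a cycle of length k ≥ 2. Then M_φ(σ) ≤ L(σ) ≤ S(σ) ≤ 4·M_φ(σ). -/
variable {n : ℕ}

/-- The optimized cost `φ*(a,b) = M_φ(swap a b)` for `a ≠ b`, and `φ*(a,a) = 0`. -/
noncomputable def optCost (φ : Fin n → Fin n → ℝ) (a b : Fin n) : ℝ :=
  if a = b then 0 else Mcost φ (Equiv.swap a b)

/-- The minimum `ψ`-cost over all transposition decompositions of `π` consisting of
exactly `m` transpositions. -/
noncomputable def Lcost (ψ : Fin n → Fin n → ℝ) (m : ℕ) (π : Equiv.Perm (Fin n)) : ℝ :=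
  sInf {c : ℝ | ∃ l : List (Fin n × Fin n), (∀ p ∈ l, p.1 ≠ p.2) ∧ l.length = m ∧
    (l.map fun p => Equiv.swap p.1 p.2).prod = π ∧
    (l.map fun p => ψ p.1 p.2).sum = c}

/-- `S(σ) = Σ_{i ∈ supp σ} φ*(i, σ i) − max_{i ∈ supp σ} φ*(i, σ i)`. -/
noncomputable def Scost (φ : Fin n → Fin n → ℝ) (σ : Equiv.Perm (Fin n)) : ℝ :=
  (∑ i ∈ σ.support, optCost φ i (σ i)) -
    sSup ((fun i => optCost φ i (σ i)) '' (↑σ.support : Set (Fin n)))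

/-!
`M ≤ L`: `M_φ` is subadditive and `φ*(a,b) = M_φ(swap a b)`, so replacing each transposition
of a decomposition by an optimal decomposition of it shows `M_φ(π) ≤` its `φ*`-cost.

`L ≤ S`: a `k`-cycle is the product of the `k - 1` transpositions along its orbit, starting
right after any chosen edge `(i, σ i)`; omitting the costliest edge gives `φ*`-cost `S`.

`S ≤ 4 M`: conjugating `swap x a` by `swap a b` gives `swap x b`, so
`φ*(x, b) ≤ φ*(x, a) + 2 φ*(a, b)`. Hence left multiplication by `swap a b` raises the
displacement `D(π) = Σ_i φ*(i, π i)` by at most `4 φ*(a, b) ≤ 4 φ(a, b)`, so `D(σ) ≤ 4 M_φ(σ)`,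
while `S ≤ D(σ)`.
-/

open Equiv Finset

section SwapDecomposition

variable {α : Type*}

theorem Equiv.Perm.IsCycleOn.sum_eq_sum_range_pow {M : Type*} [AddCommMonoid M] {σ : Perm α}
    {s : Finset α} (hσ : σ.IsCycleOn s) {x : α} (hx : x ∈ s) (f : α → M) :
    ∑ i ∈ s, f i = ∑ j ∈ range #s, f ((σ ^ j) x) := by
  refine (sum_nbij (fun j => (σ ^ j) x) ?_ ?_ ?_ fun _ _ => rfl).symm
  · exact fun j _ => hσ.1.mapsTo.perm_pow j hx
  · intro i hi j hj hij
    exact ((hσ.pow_apply_eq_pow_apply hx).1 hij).eq_of_lt_of_lt (mem_range.1 hi) (mem_range.1 hj)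
  · intro y hy
    obtain ⟨j, hj, rfl⟩ := hσ.exists_pow_eq hx hy
    exact ⟨j, mem_range.2 hj, rfl⟩

variable [DecidableEq α]

theorem Equiv.Perm.exists_swap_decomposition [Finite α] (π : Perm α) :
    ∃ l : List (α × α), (∀ p ∈ l, p.1 ≠ p.2) ∧ (l.map fun p => swap p.1 p.2).prod = π := by
  induction π using Perm.swap_induction_on with
  | one => exact ⟨[], by simp, rfl⟩
  | swap_mul π a b hab ih =>
    obtain ⟨l, hl, rfl⟩ := ih
    exact ⟨(a, b) :: l, by simpa [hab] using hl, rfl⟩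

variable [Fintype α] {σ : Perm α} {x : α}

theorem Equiv.Perm.IsCycle.prod_swap_pow_apply (hσ : σ.IsCycle) (hx : x ∈ σ.support) :
    ((List.range (#σ.support - 1)).map
      fun j => swap ((σ ^ j) x) ((σ ^ (j + 1)) x)).prod = σ := by
  have hcyc : σ.cycleOf x = σ := hσ.cycleOf_eq (Perm.mem_support.1 hx)
  conv_rhs => rw [← hcyc, ← Perm.formPerm_toList]
  rw [List.formPerm]
  congr 1
  apply List.ext_getElem
  · simp [hcyc]
  · intro i h1 h2
    simp [Perm.getElem_toList]

theorem Equiv.Perm.IsCycle.exists_swap_decomposition_sum_eq (hσ : σ.IsCycle)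
    (ψ : α → α → ℝ) {i₀ : α} (hi₀ : i₀ ∈ σ.support) :
    ∃ l : List (α × α), (∀ p ∈ l, p.1 ≠ p.2) ∧ l.length = #σ.support - 1 ∧
      (l.map fun p => swap p.1 p.2).prod = σ ∧
      (l.map fun p => ψ p.1 p.2).sum = ∑ i ∈ σ.support, ψ i (σ i) - ψ i₀ (σ i₀) := by
  have hσs : σ.IsCycleOn σ.support := by
    simpa only [Perm.coe_support_eq_set_support] using hσ.isCycleOn
  have hk : 1 ≤ #σ.support := hσ.two_le_card_support.trans' (by norm_num)
  set x := σ i₀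
  have hx : x ∈ σ.support := Perm.apply_mem_support.2 hi₀
  have hlast : (σ ^ (#σ.support - 1)) x = i₀ := by
    rw [← Perm.mul_apply, ← pow_succ, Nat.sub_add_cancel hk]
    exact hσs.pow_card_apply hi₀
  refine ⟨(List.range (#σ.support - 1)).map fun j => ((σ ^ j) x, (σ ^ (j + 1)) x),
    ?_, by simp, by rw [List.map_map]; exact hσ.prod_swap_pow_apply hx, ?_⟩
  · simp only [List.mem_map, List.mem_range]
    rintro _ ⟨j, -, rfl⟩
    rw [pow_succ', Perm.mul_apply]
    exact (Perm.mem_support.1 (Perm.pow_apply_mem_support.2 hx)).symm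
  · have hsplit := sum_range_succ (fun j => ψ ((σ ^ j) x) (σ ((σ ^ j) x))) (#σ.support - 1)
    rw [Nat.sub_add_cancel hk, hlast] at hsplit
    rw [hσs.sum_eq_sum_range_pow hx fun i => ψ i (σ i), hsplit, add_sub_cancel_right, List.map_map]
    simp [sum_eq_multiset_sum, range_val, Multiset.range, pow_succ', Function.comp_def]

end SwapDecomposition

section TranspositionCost

variable {φ : Fin n → Fin n → ℝ}

theorem sum_map_cost_nonneg (hφ : ∀ a b, a ≠ b → 0 ≤ φ a b) {l : List (Fin n × Fin n)}
    (hl : ∀ p ∈ l, p.1 ≠ p.2) : 0 ≤ (l.map fun p => φ p.1 p.2).sum :=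
  List.sum_nonneg <| by
    simp only [List.mem_map]
    rintro _ ⟨p, hp, rfl⟩
    exact hφ _ _ (hl p hp)

theorem Mcost_prod_swap_le (hφ : ∀ a b, a ≠ b → 0 ≤ φ a b) {l : List (Fin n × Fin n)}
    (hl : ∀ p ∈ l, p.1 ≠ p.2) :
    Mcost φ (l.map fun p => swap p.1 p.2).prod ≤ (l.map fun p => φ p.1 p.2).sum :=
  csInf_le ⟨0, by rintro _ ⟨l', hl', -, rfl⟩; exact sum_map_cost_nonneg hφ hl'⟩ ⟨l, hl, rfl, rfl⟩

theorem le_Mcost {π : Perm (Fin n)} {c : ℝ}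
    (h : ∀ l : List (Fin n × Fin n), (∀ p ∈ l, p.1 ≠ p.2) →
      (l.map fun p => swap p.1 p.2).prod = π → c ≤ (l.map fun p => φ p.1 p.2).sum) :
    c ≤ Mcost φ π := by
  obtain ⟨l, hl, hπ⟩ := π.exists_swap_decomposition
  refine le_csInf ⟨_, l, hl, hπ, rfl⟩ ?_
  rintro _ ⟨l, hl, hπ, rfl⟩
  exact h l hl hπ

@[simp]
theorem optCost_self (a : Fin n) : optCost φ a a = 0 := if_pos rfl

theorem optCost_comm (a b : Fin n) : optCost φ a b = optCost φ b a := by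
  simp only [optCost, eq_comm (a := a), swap_comm a b]

theorem Lcost_le {ψ : Fin n → Fin n → ℝ} (hψ : ∀ a b, 0 ≤ ψ a b) {m : ℕ} {π : Perm (Fin n)}
    {l : List (Fin n × Fin n)} (hl : ∀ p ∈ l, p.1 ≠ p.2) (hlen : l.length = m)
    (hπ : (l.map fun p => swap p.1 p.2).prod = π) :
    Lcost ψ m π ≤ (l.map fun p => ψ p.1 p.2).sum := by
  refine csInf_le ⟨0, ?_⟩ ⟨l, hl, hlen, hπ, rfl⟩
  rintro _ ⟨l', -, -, -, rfl⟩
  exact List.sum_nonneg fun c hc => by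
    obtain ⟨p, -, rfl⟩ := List.mem_map.1 hc
    exact hψ p.1 p.2

variable (hφ : ∀ a b, a ≠ b → 0 ≤ φ a b)
include hφ

theorem Mcost_nonneg (π : Perm (Fin n)) : 0 ≤ Mcost φ π :=
  le_Mcost fun _ hl _ => sum_map_cost_nonneg hφ hl

theorem Mcost_one : Mcost φ 1 = 0 :=
  le_antisymm (Mcost_prod_swap_le hφ (l := []) (by simp)) (Mcost_nonneg hφ 1)

theorem Mcost_mul_le (π₁ π₂ : Perm (Fin n)) :
    Mcost φ (π₁ * π₂) ≤ Mcost φ π₁ + Mcost φ π₂ := by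
  suffices Mcost φ (π₁ * π₂) - Mcost φ π₂ ≤ Mcost φ π₁ by linarith
  refine le_Mcost fun l₁ hl₁ hπ₁ => ?_
  suffices Mcost φ (π₁ * π₂) - (l₁.map fun p => φ p.1 p.2).sum ≤ Mcost φ π₂ by linarith
  refine le_Mcost fun l₂ hl₂ hπ₂ => ?_
  have := Mcost_prod_swap_le hφ (l := l₁ ++ l₂)
    fun p hp => (List.mem_append.1 hp).elim (hl₁ p) (hl₂ p)
  simp only [List.map_append, List.prod_append, List.sum_append, hπ₁, hπ₂] at this
  linarith

theorem optCost_eq_Mcost_swap (a b : Fin n) : optCost φ a b = Mcost φ (swap a b) := by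
  rcases eq_or_ne a b with rfl | hab
  · rw [optCost, if_pos rfl, swap_self, ← Perm.one_def, Mcost_one hφ]
  · rw [optCost, if_neg hab]

theorem optCost_nonneg (a b : Fin n) : 0 ≤ optCost φ a b :=
  (optCost_eq_Mcost_swap hφ a b).symm ▸ Mcost_nonneg hφ _

theorem optCost_le {a b : Fin n} (hab : a ≠ b) : optCost φ a b ≤ φ a b := by
  simpa [optCost_eq_Mcost_swap hφ] using Mcost_prod_swap_le hφ (l := [(a, b)]) (by simpa using hab)

theorem Mcost_prod_swap_le_sum_optCost (l : List (Fin n × Fin n)) :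
    Mcost φ (l.map fun p => swap p.1 p.2).prod ≤ (l.map fun p => optCost φ p.1 p.2).sum := by
  induction l with
  | nil => simp [Mcost_one hφ]
  | cons p l ih =>
    simp only [List.map_cons, List.prod_cons, List.sum_cons, optCost_eq_Mcost_swap hφ p.1 p.2]
    linarith [Mcost_mul_le hφ (swap p.1 p.2) (l.map fun p => swap p.1 p.2).prod]

theorem Mcost_le_Lcost_optCost {m : ℕ} {π : Perm (Fin n)} {l : List (Fin n × Fin n)}
    (hl : ∀ p ∈ l, p.1 ≠ p.2) (hlen : l.length = m)
    (hπ : (l.map fun p => swap p.1 p.2).prod = π) :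
    Mcost φ π ≤ Lcost (optCost φ) m π := by
  refine le_csInf ⟨_, l, hl, hlen, hπ, rfl⟩ ?_
  rintro _ ⟨l', -, -, rfl, rfl⟩
  exact Mcost_prod_swap_le_sum_optCost hφ l'

theorem optCost_le_add_two_mul (x a b : Fin n) :
    optCost φ x b ≤ optCost φ x a + 2 * optCost φ a b := by
  rcases eq_or_ne x b with rfl | hxb
  · simp only [optCost_self]
    linarith [optCost_nonneg hφ x a, optCost_nonneg hφ a x]
  rcases eq_or_ne x a with rfl | hxa
  · simp only [optCost_self]
    linarith [optCost_nonneg hφ x b]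
  have hconj : swap a b * swap x a * swap a b = swap x b := by
    rw [swap_mul_swap_mul_swap hxa hxb, swap_comm]
  simp only [optCost_eq_Mcost_swap hφ, ← hconj]
  linarith [Mcost_mul_le hφ (swap a b * swap x a) (swap a b),
    Mcost_mul_le hφ (swap a b) (swap x a)]

theorem optCost_swap_apply_le (a b x y : Fin n) :
    optCost φ x (swap a b y) ≤ optCost φ x y +
      ((if y = a then 2 * optCost φ a b else 0) + (if y = b then 2 * optCost φ a b else 0)) := by
  have h := optCost_nonneg hφ a b
  rw [swap_apply_def]
  split_ifs with hya hyb hyb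
  · subst hya hyb; simp only [optCost_self]; linarith
  · subst hya; linarith [optCost_le_add_two_mul hφ x y b]
  · subst hyb; linarith [optCost_le_add_two_mul hφ x y a, optCost_comm (φ := φ) y a]
  · linarith

theorem sum_optCost_swap_mul_le (a b : Fin n) (π : Perm (Fin n)) :
    ∑ i, optCost φ i ((swap a b * π) i) ≤ ∑ i, optCost φ i (π i) + 4 * optCost φ a b := by
  set g : Fin n → ℝ := fun y =>
    (if y = a then 2 * optCost φ a b else 0) + (if y = b then 2 * optCost φ a b else 0)
  calc ∑ i, optCost φ i ((swap a b * π) i)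
      ≤ ∑ i, (optCost φ i (π i) + g (π i)) :=
        sum_le_sum fun i _ => optCost_swap_apply_le hφ a b i (π i)
    _ = ∑ i, optCost φ i (π i) + ∑ y, g y := by rw [sum_add_distrib, Equiv.sum_comp π g]
    _ = ∑ i, optCost φ i (π i) + 4 * optCost φ a b := by
        simp only [g, sum_add_distrib, sum_ite_eq', mem_univ, if_true]
        ring

theorem sum_optCost_prod_swap_le {l : List (Fin n × Fin n)} (hl : ∀ p ∈ l, p.1 ≠ p.2) :
    ∑ i, optCost φ i ((l.map fun p => swap p.1 p.2).prod i) ≤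
      4 * (l.map fun p => φ p.1 p.2).sum := by
  induction l with
  | nil => simp
  | cons p l ih =>
    simp only [List.map_cons, List.prod_cons, List.sum_cons]
    linarith [sum_optCost_swap_mul_le hφ p.1 p.2 (l.map fun p => swap p.1 p.2).prod,
      ih fun q hq => hl q (List.mem_cons_of_mem p hq), optCost_le hφ (hl p List.mem_cons_self)]

theorem sum_optCost_le_four_mul_Mcost (π : Perm (Fin n)) :
    ∑ i, optCost φ i (π i) ≤ 4 * Mcost φ π := by
  have : (∑ i, optCost φ i (π i)) / 4 ≤ Mcost φ π := le_Mcost fun l hl hπ => by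
    linarith [hπ ▸ sum_optCost_prod_swap_le hφ hl]
  linarith

end TranspositionCost

theorem stmt12_general (φ : Fin n → Fin n → ℝ)
    (hnn : ∀ a b : Fin n, a ≠ b → 0 ≤ φ a b)
    (k : ℕ)
    (σ : Equiv.Perm (Fin n)) (hσ : σ.IsCycle) (hcard : σ.support.card = k) :
    Mcost φ σ ≤ Lcost (optCost φ) (k - 1) σ ∧
    Lcost (optCost φ) (k - 1) σ ≤ Scost φ σ ∧
    Scost φ σ ≤ 4 * Mcost φ σ := by
  subst hcard
  set f : Fin n → ℝ := fun i => optCost φ i (σ i)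
  obtain ⟨i₀, hi₀, hmax⟩ := ((coe_nonempty.2 hσ.nonempty_support).image f).csSup_mem
    (σ.support.finite_toSet.image f)
  obtain ⟨l, hl, hlen, hprod, hsum⟩ := hσ.exists_swap_decomposition_sum_eq (optCost φ) hi₀
  have hS : Scost φ σ = (l.map fun p => optCost φ p.1 p.2).sum := by rw [Scost, hsum, ← hmax]
  refine ⟨Mcost_le_Lcost_optCost hnn hl hlen hprod,
    hS ▸ Lcost_le (optCost_nonneg hnn) hl hlen hprod, ?_⟩
  calc Scost φ σ ≤ ∑ i ∈ σ.support, f i := by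
        rw [Scost, ← hmax]
        linarith [optCost_nonneg hnn i₀ (σ i₀)]
    _ = ∑ i, f i := sum_subset (subset_univ _) fun i _ hi => by
        simp only [f, Perm.notMem_support.1 hi, optCost_self]
    _ ≤ 4 * Mcost φ σ := sum_optCost_le_four_mul_Mcost hnn σ

/-- for a cycle `σ` of length `k ≥ 2`,
`M_φ(σ) ≤ L(σ) ≤ S(σ) ≤ 4 M_φ(σ)`, where `L(σ)` is the minimum `φ*`-cost over
decompositions of `σ` with exactly `k − 1` transpositions. -/
theorem stmt12 (φ : Fin n → Fin n → ℝ)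
    (hnn : ∀ a b : Fin n, a ≠ b → 0 ≤ φ a b)
    (hsym : ∀ a b : Fin n, φ a b = φ b a)
    (k : ℕ) (hk : 2 ≤ k)
    (σ : Equiv.Perm (Fin n)) (hσ : σ.IsCycle) (hcard : σ.support.card = k) :
    Mcost φ σ ≤ Lcost (optCost φ) (k - 1) σ ∧
    Lcost (optCost φ) (k - 1) σ ≤ Scost φ σ ∧
    Scost φ σ ≤ 4 * Mcost φ σ :=
  stmt12_general φ hnn k σ hσ hcard
end
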